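/- arXiv:math/0512363 — 3 statements merged into one kernel-verified Lean document; each statement's English description precedes it below -/
import Mathlib

section
/- Let r ≥ s ≥ 3 with r ≤ ⌊(5s−1)/3⌋ − 1. If Δ : [1, 6s − 5] → {1,2,3} is any 3-coloring, then either (i) there exists a monochromatic r-element subset S ⊆ [1, 6s − 5] with diam(S) ≥ 3s − 3, or (ii) there exist monochromatic sets S₁, S₂ ⊆ [1, 6s − 5] with |S₁| = s, |S₂| = r, max(S₁) < min(S₂), and diam(S₁) ≤ diam(S₂). -/
open Finset

/-- diameter of a finite set of naturals -/
def diam (S : Finset ℕ) : ℕ := (S.max.getD 0) - (S.min.getD 0)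

/-- S is monochromatic under a coloring -/
def Mono {α : Type*} (f : ℕ → α) (S : Finset ℕ) : Prop := ∀ a ∈ S, ∀ b ∈ S, f a = f b

/-- S is zero-sum mod m under an integer coloring -/
def ZeroSum (f : ℕ → ℤ) (m : ℕ) (S : Finset ℕ) : Prop := (m : ℤ) ∣ ∑ x ∈ S, f x

/-- every element of S colored ∞ (= none) -/
def InftyMono (f : ℕ → Option ℤ) (S : Finset ℕ) : Prop := ∀ x ∈ S, f x = none

/-- S consists of ℤ-colored elements and is zero-sum mod m -/
def ZeroSumOpt (f : ℕ → Option ℤ) (m : ℕ) (S : Finset ℕ) : Prop :=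
  (∀ x ∈ S, (f x).isSome) ∧ (m : ℤ) ∣ ∑ x ∈ S, (f x).getD 0

/-!
If no monochromatic `r`-set has diameter `≥ 3s - 3`, every colour class with at least `r`
elements has diameter `≤ 3s - 4`, since an `r`-subset can keep its minimum and maximum. Then
either the classes of both endpoints `1` and `6s - 5` are large, or some class is small and
one or two classes are large. In every case `S₂` is an `r`-subset spanning a large class (or the
part of it left over), and `S₁` consists of the `s` smallest elements of a monochromatic set `L`
below it; the other `#L - s` elements of `L` lie above `S₁`, so `diam S₁ ≤ diam L - (#L - s)`,
and counting shows this is at most `diam S₂`.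
-/

lemma Finset.exists_subset_card_eq_forall_lt_sdiff {α : Type*} [LinearOrder α] (T : Finset α) :
    ∀ k ≤ #T, ∃ A ⊆ T, #A = k ∧ ∀ a ∈ A, ∀ b ∈ T \ A, a < b := by
  induction T using Finset.induction_on_max with
  | empty => intro k hk; exact ⟨∅, Subset.rfl, (by simpa using hk : k = 0).symm, by simp⟩
  | insert m T hlt ih =>
    intro k hk
    have hm : m ∉ T := fun h => lt_irrefl _ (hlt m h)
    rw [card_insert_of_notMem hm] at hk
    rcases hk.lt_or_eq with hk | rfl
    · obtain ⟨A, hAT, hA, hAlt⟩ := ih k (by omega)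
      refine ⟨A, hAT.trans (subset_insert _ _), hA, fun a ha b hb => ?_⟩
      obtain ⟨hbT, hbA⟩ := mem_sdiff.mp hb
      rcases mem_insert.mp hbT with rfl | hbT
      · exact hlt a (hAT ha)
      · exact hAlt a ha b (mem_sdiff.mpr ⟨hbT, hbA⟩)
    · exact ⟨insert m T, Subset.rfl, card_insert_of_notMem hm, by simp⟩

section Diam

variable {S T A B : Finset ℕ} {a b k : ℕ}

lemma diam_eq_max'_sub_min' (h : S.Nonempty) : diam S = S.max' h - S.min' h := by
  rw [diam, ← coe_max' h, ← coe_min' h]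
  rfl

lemma diam_empty : diam ∅ = 0 := rfl

lemma sub_le_diam (ha : a ∈ S) (hb : b ∈ S) : b - a ≤ diam S := by
  rw [diam_eq_max'_sub_min' ⟨a, ha⟩]
  have := S.le_max' b hb
  have := S.min'_le a ha
  omega

lemma diam_mono (h : S ⊆ T) : diam S ≤ diam T := by
  rcases S.eq_empty_or_nonempty with rfl | hS
  · simp [diam_empty]
  rw [diam_eq_max'_sub_min' hS]
  exact sub_le_diam (h (S.min'_mem hS)) (h (S.max'_mem hS))

lemma diam_le_of_subset_Icc (h : S ⊆ Icc a b) : diam S ≤ b - a := by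
  rcases S.eq_empty_or_nonempty with rfl | hS
  · simp [diam_empty]
  rw [diam_eq_max'_sub_min' hS]
  have := (mem_Icc.mp (h (S.min'_mem hS))).1
  have := (mem_Icc.mp (h (S.max'_mem hS))).2
  omega

lemma card_le_diam_add_one (S : Finset ℕ) : #S ≤ diam S + 1 := by
  rcases S.eq_empty_or_nonempty with rfl | hS
  · simp
  have hIcc : S ⊆ Icc (S.min' hS) (S.max' hS) :=
    fun x hx => mem_Icc.mpr ⟨S.min'_le x hx, S.le_max' x hx⟩
  have := card_le_card hIcc
  rw [Nat.card_Icc] at this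
  rw [diam_eq_max'_sub_min' hS]
  omega

lemma diam_add_diam_lt_diam_union (hA : A.Nonempty) (hB : B.Nonempty)
    (hAB : ∀ a ∈ A, ∀ b ∈ B, a < b) : diam A + diam B < diam (A ∪ B) := by
  have hgap := hAB _ (A.max'_mem hA) _ (B.min'_mem hB)
  have := sub_le_diam (mem_union_left B (A.min'_mem hA)) (mem_union_right A (B.max'_mem hB))
  rw [diam_eq_max'_sub_min' hA, diam_eq_max'_sub_min' hB]
  have := A.min'_le _ (A.max'_mem hA)
  have := B.min'_le _ (B.max'_mem hB)
  omega

lemma exists_subset_card_eq_diam_eq (hk : 2 ≤ k) (hkT : k ≤ #T) :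
    ∃ S ⊆ T, #S = k ∧ diam S = diam T := by
  have hT : T.Nonempty := card_pos.mp (by omega)
  have hends : {T.min' hT, T.max' hT} ⊆ T := by
    simp [insert_subset_iff, T.min'_mem hT, T.max'_mem hT]
  obtain ⟨S, hendsS, hST, hS⟩ :=
    exists_subsuperset_card_eq hends ((card_insert_le _ _).trans (by simpa using hk)) hkT
  refine ⟨S, hST, hS, le_antisymm (diam_mono hST) ?_⟩
  rw [diam_eq_max'_sub_min' hT]
  exact sub_le_diam (hendsS (mem_insert_self _ _)) (hendsS (by simp))

lemma exists_subset_card_eq_diam_add_card_le (hk : 0 < k) (hkT : k ≤ #T) :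
    ∃ A ⊆ T, #A = k ∧ (∀ a ∈ A, ∀ b ∈ T \ A, a < b) ∧ diam A + #T ≤ diam T + k := by
  obtain ⟨A, hAT, hA, hlt⟩ := T.exists_subset_card_eq_forall_lt_sdiff k hkT
  refine ⟨A, hAT, hA, hlt, ?_⟩
  rcases (T \ A).eq_empty_or_nonempty with hrest | hrest
  · obtain rfl : A = T := hAT.antisymm (sdiff_eq_empty_iff_subset.mp hrest)
    omega
  have hsplit := diam_add_diam_lt_diam_union (card_pos.mp (by omega)) hrest hlt
  rw [union_sdiff_of_subset hAT] at hsplit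
  have hrest_card := card_le_diam_add_one (T \ A)
  rw [card_sdiff_of_subset hAT] at hrest_card
  omega

end Diam

section Coloring

variable {α : Type*} {Δ : ℕ → α} {n s r d : ℕ}

lemma Mono.subset {S T : Finset ℕ} (hT : Mono Δ T) (hST : S ⊆ T) : Mono Δ S :=
  fun a ha b hb => hT a (hST ha) b (hST hb)

/-- Alternative (ii) of the theorem, for colorings of `[1, n]`. -/
def HasOrderedMonoPair (Δ : ℕ → α) (n s r : ℕ) : Prop :=
  ∃ S₁ S₂ : Finset ℕ, S₁ ⊆ Icc 1 n ∧ S₂ ⊆ Icc 1 n ∧ Mono Δ S₁ ∧ Mono Δ S₂ ∧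
    #S₁ = s ∧ #S₂ = r ∧ (∀ a ∈ S₁, ∀ b ∈ S₂, a < b) ∧ diam S₁ ≤ diam S₂

lemma hasOrderedMonoPair_of_forall_lt {L T : Finset ℕ} (hL : L ⊆ Icc 1 n) (hT : T ⊆ Icc 1 n)
    (hLm : Mono Δ L) (hTm : Mono Δ T) (hs : 0 < s) (hsL : s ≤ #L) (hr : 2 ≤ r) (hrT : r ≤ #T)
    (hlt : ∀ a ∈ L, ∀ b ∈ T, a < b) (hdiam : diam L + s ≤ #L + diam T) :
    HasOrderedMonoPair Δ n s r := by
  obtain ⟨S₁, hS₁L, hS₁, -, hS₁d⟩ := exists_subset_card_eq_diam_add_card_le hs hsL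
  obtain ⟨S₂, hS₂T, hS₂, hS₂d⟩ := exists_subset_card_eq_diam_eq hr hrT
  exact ⟨S₁, S₂, hS₁L.trans hL, hS₂T.trans hT, hLm.subset hS₁L, hTm.subset hS₂T, hS₁, hS₂,
    fun a ha b hb => hlt a (hS₁L ha) b (hS₂T hb), by omega⟩

lemma hasOrderedMonoPair_of_diam_add_le {T : Finset ℕ} (hT : T ⊆ Icc 1 n) (hTm : Mono Δ T)
    (hs : 0 < s) (hr : 2 ≤ r) (hsrT : s + r ≤ #T) (hdiam : diam T + 2 * s + 1 ≤ 2 * #T) :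
    HasOrderedMonoPair Δ n s r := by
  obtain ⟨A, hAT, hA, hlt, hAd⟩ := exists_subset_card_eq_diam_add_card_le hs (by omega : s ≤ #T)
  have hrest : #(T \ A) = #T - s := by rw [card_sdiff_of_subset hAT, hA]
  have := card_le_diam_add_one (T \ A)
  exact hasOrderedMonoPair_of_forall_lt (hAT.trans hT) (sdiff_subset.trans hT)
    (hTm.subset hAT) (hTm.subset sdiff_subset) hs hA.ge hr (by omega) hlt (by omega)

variable [DecidableEq α]

lemma mono_filter_eq (Δ : ℕ → α) (X : Finset ℕ) (c : α) : Mono Δ {x ∈ X | Δ x = c} :=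
  fun _ ha _ hb => (mem_filter.mp ha).2.trans (mem_filter.mp hb).2.symm

def colorClass (Δ : ℕ → α) (n : ℕ) (c : α) : Finset ℕ := {x ∈ Icc 1 n | Δ x = c}

lemma colorClass_subset {c : α} : colorClass Δ n c ⊆ Icc 1 n := filter_subset _ _

lemma mono_colorClass (c : α) : Mono Δ (colorClass Δ n c) := mono_filter_eq Δ _ c

lemma card_le_card_colorClass_add {c₁ c₂ c₃ : α} (hcover : ∀ c, c ≠ c₁ → c ≠ c₂ → c = c₃) :
    n ≤ #(colorClass Δ n c₁) + #(colorClass Δ n c₂) + #(colorClass Δ n c₃) := by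
  have hsub : Icc 1 n ⊆ colorClass Δ n c₁ ∪ colorClass Δ n c₂ ∪ colorClass Δ n c₃ := by
    intro x hx
    by_cases h₁ : Δ x = c₁
    · simp [colorClass, hx, h₁]
    by_cases h₂ : Δ x = c₂
    · simp [colorClass, hx, h₂]
    simp [colorClass, hx, hcover _ h₁ h₂]
  calc n = #(Icc 1 n) := by simp
    _ ≤ #(colorClass Δ n c₁ ∪ colorClass Δ n c₂ ∪ colorClass Δ n c₃) := card_le_card hsub
    _ ≤ _ := by grw [card_union_le, card_union_le]

/-- With `K₂` the class of `c₂`, only `c₁` and `c₃` occur below `min K₂` and only `c₃` above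
`max K₂`; as `c₃` is rare, many elements of colour `c₁` lie below `K₂`. -/
lemma hasOrderedMonoPair_of_max_le {c₁ c₂ c₃ : α} (hcover : ∀ c, c ≠ c₁ → c ≠ c₂ → c = c₃)
    (hs : 0 < s) (hr : 2 ≤ r) (hn : d + s + r ≤ n) (hd₁ : diam (colorClass Δ n c₁) ≤ d)
    (hr₂ : r ≤ #(colorClass Δ n c₂)) (hd₂ : diam (colorClass Δ n c₂) ≤ d)
    (hr₃ : #(colorClass Δ n c₃) < r)
    (hmax : (colorClass Δ n c₁).max ≤ (colorClass Δ n c₂).max) :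
    HasOrderedMonoPair Δ n s r := by
  set K₂ := colorClass Δ n c₂
  have hK₂ : K₂.Nonempty := card_pos.mp (by omega)
  set L := {x ∈ colorClass Δ n c₁ | x < K₂.min' hK₂}
  have hcover' : Icc 1 n ⊆ L ∪ colorClass Δ n c₃ ∪ Icc (K₂.min' hK₂) (K₂.max' hK₂) := by
    intro x hx
    have hK : ∀ c, Δ x = c → x ∈ colorClass Δ n c := fun c h => mem_filter.mpr ⟨hx, h⟩
    simp only [mem_union, mem_Icc, L, mem_filter]
    by_cases hlow : x < K₂.min' hK₂
    · by_cases h₁ : Δ x = c₁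
      · exact .inl (.inl ⟨hK c₁ h₁, hlow⟩)
      · have h₂ : Δ x ≠ c₂ := fun h => (K₂.min'_le x (hK c₂ h)).not_gt hlow
        exact .inl (.inr (hK c₃ (hcover _ h₁ h₂)))
    by_cases hhigh : x ≤ K₂.max' hK₂
    · exact .inr ⟨not_lt.mp hlow, hhigh⟩
    have h₁ : Δ x ≠ c₁ := fun h => hhigh (WithBot.coe_le_coe.mp
      ((le_max (hK c₁ h)).trans (hmax.trans (coe_max' hK₂).ge)))
    have h₂ : Δ x ≠ c₂ := fun h => hhigh (K₂.le_max' x (hK c₂ h))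
    exact .inl (.inr (hK c₃ (hcover _ h₁ h₂)))
  have hmid : #(Icc (K₂.min' hK₂) (K₂.max' hK₂)) = diam K₂ + 1 := by
    have := K₂.min'_le _ (K₂.max'_mem hK₂)
    rw [Nat.card_Icc, diam_eq_max'_sub_min' hK₂]
    omega
  have hcount : n ≤ #L + #(colorClass Δ n c₃) + (diam K₂ + 1) :=
    calc n = #(Icc 1 n) := by simp
      _ ≤ _ := card_le_card hcover'
      _ ≤ _ := by grw [card_union_le, card_union_le, hmid]
  have hdL : diam L ≤ d := (diam_mono (filter_subset _ _)).trans hd₁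
  refine hasOrderedMonoPair_of_forall_lt (L := L) (T := K₂)
    ((filter_subset _ _).trans colorClass_subset) colorClass_subset
    ((mono_colorClass c₁).subset (filter_subset _ _)) (mono_colorClass c₂)
    hs (by omega) hr hr₂ (fun a ha b hb => ?_) (by omega)
  exact (mem_filter.mp ha).2.trans_le (K₂.min'_le b hb)

end Coloring

lemma Fin.exists_forall_ne_ne_imp_eq_three : ∀ c₃ : Fin 3, ∃ c₁ c₂ : Fin 3,
    ∀ c, c ≠ c₁ → c ≠ c₂ → c = c₃ := by
  decide

lemma Fin.eq_of_ne_of_ne_three : ∀ {a b u w : Fin 3}, u ≠ w → a ≠ u → a ≠ w → b ≠ u → b ≠ w →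
    a = b := by
  decide

section ThreeColorings

variable {Δ : ℕ → Fin 3} {n s r d : ℕ}

/-- The class `W` of `n` lies in `[n - diam W, n]` and the class of `1` in `[1, d + 1]`. If `W`
is wide, `[1, 2s - 1]` avoids it and so has `s` points of one colour; otherwise the block
`[n + 3 - 3s, n + 2 - 2s]` lies strictly between the two classes and has the third colour. -/
lemma hasOrderedMonoPair_of_endpoints (hs : 0 < s) (hsr : s ≤ r) (hr : 2 ≤ r)
    (hn : d + 3 * s ≤ n + 1) (hd₁ : diam (colorClass Δ n (Δ 1)) ≤ d)
    (hrn : r ≤ #(colorClass Δ n (Δ n))) (hdn : diam (colorClass Δ n (Δ n)) ≤ d) :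
    HasOrderedMonoPair Δ n s r := by
  set W := colorClass Δ n (Δ n)
  have hnW : n ∈ W := mem_filter.mpr ⟨mem_Icc.mpr ⟨by omega, le_rfl⟩, rfl⟩
  have hW : ∀ x ∈ Icc 1 n, Δ x = Δ n → n - diam W ≤ x := fun x hx h => by
    have := sub_le_diam (S := W) (mem_filter.mpr ⟨hx, h⟩) hnW
    omega
  have hWcard := card_le_diam_add_one W
  by_cases hwide : 2 * s ≤ diam W + 2
  · have hmaps : ∀ x ∈ Icc 1 (2 * s - 1), Δ x ∈ univ.erase (Δ n) := fun x hx => by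
      have hx := mem_Icc.mp hx
      refine mem_erase.mpr ⟨fun h => ?_, mem_univ _⟩
      have := hW x (mem_Icc.mpr ⟨hx.1, by omega⟩) h
      omega
    obtain ⟨c, -, hc⟩ := exists_lt_card_fiber_of_mul_lt_card_of_maps_to hmaps
      (n := s - 1) (by simp; omega)
    have hdL := diam_le_of_subset_Icc (filter_subset (fun x => Δ x = c) (Icc 1 (2 * s - 1)))
    refine hasOrderedMonoPair_of_forall_lt (L := {x ∈ Icc 1 (2 * s - 1) | Δ x = c}) (T := W)
      ((filter_subset _ _).trans (Icc_subset_Icc le_rfl (by omega))) colorClass_subset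
      (mono_filter_eq Δ _ c) (mono_colorClass _) hs (by omega) hr hrn (fun a ha b hb => ?_)
      (by omega)
    have ha := mem_Icc.mp (mem_filter.mp ha).1
    have := hW b (colorClass_subset hb) (mem_filter.mp hb).2
    omega
  · have hU : ∀ x ∈ Icc 1 n, Δ x = Δ 1 → x ≤ d + 1 := fun x hx h => by
      have h1 : 1 ∈ colorClass Δ n (Δ 1) := mem_filter.mpr ⟨mem_Icc.mpr ⟨le_rfl, by omega⟩, rfl⟩
      have := sub_le_diam h1 (mem_filter.mpr ⟨hx, h⟩ : x ∈ colorClass Δ n (Δ 1))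
      omega
    have hUW : Δ 1 ≠ Δ n := fun h => by
      have := hU n (mem_Icc.mpr ⟨by omega, le_rfl⟩) h.symm
      omega
    have hblock : ∀ x ∈ Icc (n + 3 - 3 * s) (n + 2 - 2 * s), Δ x ≠ Δ 1 ∧ Δ x ≠ Δ n :=
      fun x hx => by
        have hx' := mem_Icc.mp hx
        have hxn : x ∈ Icc 1 n := mem_Icc.mpr ⟨by omega, by omega⟩
        refine ⟨fun h => ?_, fun h => ?_⟩
        · have := hU x hxn h
          omega
        · have := hW x hxn h
          omega
    refine hasOrderedMonoPair_of_forall_lt (L := Icc (n + 3 - 3 * s) (n + 2 - 2 * s)) (T := W)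
      (Icc_subset_Icc (by omega) (by omega)) colorClass_subset (fun a ha b hb => ?_)
      (mono_colorClass _) hs (by rw [Nat.card_Icc]; omega) hr hrn (fun a ha b hb => ?_) ?_
    · exact Fin.eq_of_ne_of_ne_three hUW (hblock a ha).1 (hblock a ha).2 (hblock b hb).1
        (hblock b hb).2
    · have ha := mem_Icc.mp ha
      have := hW b (colorClass_subset hb) (mem_filter.mp hb).2
      omega
    · have := diam_le_of_subset_Icc (subset_refl (Icc (n + 3 - 3 * s) (n + 2 - 2 * s)))
      rw [Nat.card_Icc]
      omega

lemma hasOrderedMonoPair_of_forall_diam_colorClass_le (hs : 3 ≤ s) (hsr : s ≤ r)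
    (hr : 3 * r + 4 ≤ 5 * s)
    (hspread : ∀ c, r ≤ #(colorClass Δ (6 * s - 5) c) →
      diam (colorClass Δ (6 * s - 5) c) ≤ 3 * s - 4) :
    HasOrderedMonoPair Δ (6 * s - 5) s r := by
  set n := 6 * s - 5 with hn
  by_cases hends : r ≤ #(colorClass Δ n (Δ 1)) ∧ r ≤ #(colorClass Δ n (Δ n))
  · exact hasOrderedMonoPair_of_endpoints (by omega) hsr (by omega) (by omega)
      (hspread _ hends.1) hends.2 (hspread _ hends.2)
  obtain ⟨c₃, hc₃⟩ : ∃ c, #(colorClass Δ n c) < r := by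
    by_contra! h
    exact hends ⟨h _, h _⟩
  obtain ⟨c₁, c₂, hcover⟩ := Fin.exists_forall_ne_ne_imp_eq_three c₃
  have hcount := card_le_card_colorClass_add (Δ := Δ) (n := n) hcover
  by_cases h₁ : r ≤ #(colorClass Δ n c₁) <;> by_cases h₂ : r ≤ #(colorClass Δ n c₂)
  · rcases le_total (colorClass Δ n c₁).max (colorClass Δ n c₂).max with h | h
    · exact hasOrderedMonoPair_of_max_le hcover (by omega) (by omega) (by omega)
        (hspread _ h₁) h₂ (hspread _ h₂) hc₃ h
    · exact hasOrderedMonoPair_of_max_le (fun c h₂ h₁ => hcover c h₁ h₂) (by omega) (by omega)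
        (by omega) (hspread _ h₂) h₁ (hspread _ h₁) hc₃ h
  · have := hspread _ h₁
    exact hasOrderedMonoPair_of_diam_add_le (T := colorClass Δ n c₁) colorClass_subset
      (mono_colorClass _) (by omega) (by omega) (by omega) (by omega)
  · have := hspread _ h₂
    exact hasOrderedMonoPair_of_diam_add_le (T := colorClass Δ n c₂) colorClass_subset
      (mono_colorClass _) (by omega) (by omega) (by omega) (by omega)
  · omega

end ThreeColorings

theorem stmt12 (s r : ℕ) (hs : 3 ≤ s) (hsr : s ≤ r) (hr : r ≤ (5 * s - 1) / 3 - 1)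
    (Δ : ℕ → Fin 3) :
    (∃ S : Finset ℕ, S ⊆ Finset.Icc 1 (6 * s - 5) ∧ Mono Δ S ∧ S.card = r ∧ 3 * s - 3 ≤ diam S) ∨
    (∃ S₁ S₂ : Finset ℕ, S₁ ⊆ Finset.Icc 1 (6 * s - 5) ∧ S₂ ⊆ Finset.Icc 1 (6 * s - 5) ∧
      Mono Δ S₁ ∧ Mono Δ S₂ ∧ S₁.card = s ∧ S₂.card = r ∧
      (∀ a ∈ S₁, ∀ b ∈ S₂, a < b) ∧ diam S₁ ≤ diam S₂) := by
  refine or_iff_not_imp_left.mpr fun hlong => ?_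
  have hspread : ∀ c, r ≤ #(colorClass Δ (6 * s - 5) c) →
      diam (colorClass Δ (6 * s - 5) c) ≤ 3 * s - 4 := by
    intro c hc
    by_contra! hwide
    obtain ⟨S, hSK, hS, hSd⟩ := exists_subset_card_eq_diam_eq (by omega) hc
    exact hlong ⟨S, hSK.trans colorClass_subset, (mono_colorClass c).subset hSK, hS, by omega⟩
  exact hasOrderedMonoPair_of_forall_diam_colorClass_le hs hsr (by omega) hspread
end

section
/- Let m and k be positive integers with k dividing m. For every map Δ : [1, m + k − 1] → ℤ/mℤ there exist distinct x₁, …, x_m ∈ [1, m + k − 1] with Σᵢ Δ(xᵢ) ≡ 0 (mod k). Moreover, m + k − 1 is the smallest integer for which this assertion holds. -/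
open Finset

/-- Iterated EGZ extraction: from a set of at least q*k + (k-1) elements one can pick
q*k of them with zero sum mod k. -/
lemma egz_iter {k : ℕ} (f : ℕ → ZMod k) :
    ∀ (q : ℕ) (S : Finset ℕ), q * k + (k - 1) ≤ S.card →
      ∃ T ⊆ S, T.card = q * k ∧ ∑ x ∈ T, f x = 0 := by
  intro q
  induction q with
  | zero => intro S _; exact ⟨∅, by simp⟩
  | succ q ih =>
    intro S hS
    have hmul : (q + 1) * k = q * k + k := by ring
    have h2 : 2 * k - 1 ≤ S.card := by omega
    obtain ⟨U, hUS, hUcard, hUsum⟩ := ZMod.erdos_ginzburg_ziv f h2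
    have hle := Finset.card_le_card hUS
    have hmul : q * k = k * q := Nat.mul_comm q k
    have hcard : q * k + (k - 1) ≤ (S \ U).card := by
      rw [Finset.card_sdiff_of_subset hUS]
      omega
    obtain ⟨T, hTS, hTcard, hTsum⟩ := ih (S \ U) hcard
    have hdisj : Disjoint T U := by
      refine Finset.disjoint_left.2 fun a haT haU => ?_
      exact (Finset.mem_sdiff.1 (hTS haT)).2 haU
    refine ⟨T ∪ U, ?_, ?_, ?_⟩
    · exact Finset.union_subset (hTS.trans Finset.sdiff_subset) hUS
    · rw [Finset.card_union_of_disjoint hdisj, hTcard, hUcard]; ring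
    · rw [Finset.sum_union hdisj, hTsum, hUsum, add_zero]

theorem stmt16 (m k : ℕ) (hm : 0 < m) (hk : 0 < k) (hdvd : k ∣ m) :
    IsLeast {n : ℕ | ∀ Δ : ℕ → ZMod m, ∃ T : Finset ℕ, T ⊆ Finset.Icc 1 n ∧ T.card = m ∧
      (∑ x ∈ T, ZMod.castHom hdvd (ZMod k) (Δ x)) = 0} (m + k - 1) := by
  obtain ⟨q, hq⟩ := id hdvd
  constructor
  · intro Δ
    have hmul : q * k = k * q := Nat.mul_comm q k
    have hcard : q * k + (k - 1) ≤ (Finset.Icc 1 (m + k - 1)).card := by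
      rw [Nat.card_Icc]; omega
    obtain ⟨T, hTS, hTcard, hTsum⟩ :=
      egz_iter (fun x => ZMod.castHom hdvd (ZMod k) (Δ x)) q _ hcard
    exact ⟨T, hTS, by omega, hTsum⟩
  · -- lower bound
    intro n hn
    by_contra hlt
    push_neg at hlt
    by_cases hnm : n < m
    · obtain ⟨T, hTS, hTcard, _⟩ := hn 0
      have := Finset.card_le_card hTS
      rw [Nat.card_Icc] at this
      omega
    · push_neg at hnm
      have hk2 : 2 ≤ k := by omega
      set Δ : ℕ → ZMod m := fun x => if x < m then 0 else 1 with hΔ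
      obtain ⟨T, hTS, hTcard, hTsum⟩ := hn Δ
      set j := (T.filter (fun x => ¬ x < m)).card with hj
      have hsum : ∑ x ∈ T, ZMod.castHom hdvd (ZMod k) (Δ x) = (j : ZMod k) := by
        rw [← Finset.sum_filter_add_sum_filter_not T (fun x => x < m)]
        have h1 : ∑ x ∈ T.filter (fun x => x < m),
            ZMod.castHom hdvd (ZMod k) (Δ x) = 0 := by
          apply Finset.sum_eq_zero
          intro x hx
          simp only [Finset.mem_filter] at hx
          simp [hΔ, hx.2]
        have h2 : ∑ x ∈ T.filter (fun x => ¬ x < m),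
            ZMod.castHom hdvd (ZMod k) (Δ x) = (j : ZMod k) := by
          have he : ∀ x ∈ T.filter (fun x => ¬ x < m),
              ZMod.castHom hdvd (ZMod k) (Δ x) = 1 := by
            intro x hx
            simp only [Finset.mem_filter] at hx
            rw [hΔ]; simp only [if_neg hx.2]; exact map_one _
          rw [Finset.sum_congr rfl he, Finset.sum_const, nsmul_eq_mul, mul_one, hj]
        rw [h1, h2, zero_add]
      rw [hsum] at hTsum
      have hjpos : 0 < j := by
        rcases Nat.eq_zero_or_pos j with h0 | h
        · exfalso
          have hfe : T.filter (fun x => ¬ x < m) = ∅ := Finset.card_eq_zero.1 (by omega)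
          have hall : T ⊆ Finset.Icc 1 (m - 1) := by
            intro x hx
            have hx1 := Finset.mem_Icc.1 (hTS hx)
            have hxm : x < m := by
              by_contra hxk
              exact Finset.notMem_empty x (hfe ▸ Finset.mem_filter.2 ⟨hx, hxk⟩)
            exact Finset.mem_Icc.2 ⟨hx1.1, by omega⟩
          have := Finset.card_le_card hall
          rw [Nat.card_Icc] at this
          omega
        · exact h
      have hjlt : j < k := by
        have hsub : T.filter (fun x => ¬ x < m) ⊆ Finset.Icc m n := by
          intro x hx
          simp only [Finset.mem_filter, not_lt] at hx
          have := Finset.mem_Icc.1 (hTS hx.1)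
          exact Finset.mem_Icc.2 ⟨hx.2, this.2⟩
        have := Finset.card_le_card hsub
        rw [Nat.card_Icc] at this
        omega
      have : (j : ZMod k) ≠ 0 := by
        rw [Ne, ZMod.natCast_eq_zero_iff]
        intro hd
        exact absurd (Nat.le_of_dvd hjpos hd) (by omega)
      exact this hTsum
end

section
/- Let m ≥ 3 be an integer and let S be a set with |S| = 2m − 2. If Δ : S → ℤ/mℤ is a coloring taking at least 3 distinct values, then there exist m distinct elements x₁, …, x_m ∈ S with Σᵢ Δ(xᵢ) = 0 in ℤ/mℤ. -/
open Finset

open Pointwise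
set_option linter.unusedSectionVars false
set_option linter.unusedVariables false
set_option maxHeartbeats 1600000

namespace BD
universe u v

def Stmt (m : ℕ) : Prop :=
  ∀ {α : Type u} [DecidableEq α] (S : Finset α) (Δ : α → ZMod m),
    S.card = 2 * m - 2 → 3 ≤ (S.image Δ).card →
      ∃ T ⊆ S, T.card = m ∧ (∑ x ∈ T, Δ x) = 0

/-- Generic structure lemma: a (2n-2)-set with no n-subset summing to zero (mod n)
is split into two fibers of size (n-1) whose difference has additive order n. -/
lemma two_valued_struct {β : Type u} [DecidableEq β] {n : ℕ} (hn : 2 ≤ n)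
    (X : Finset β) (f : β → ZMod n) (hX : X.card = 2 * n - 2)
    (hno : ∀ D ⊆ X, D.card = n → (∑ x ∈ D, f x) = 0 → False)
    (hst : 3 ≤ n → Stmt.{u} n) :
    ∃ ub vb : ZMod n, ub ≠ vb ∧
      (X.filter (fun x => f x = ub)).card = n - 1 ∧
      (X.filter (fun x => f x = vb)).card = n - 1 ∧
      (∀ x ∈ X, f x = ub ∨ f x = vb) ∧
      (∀ a : ℕ, 1 ≤ a → a ≤ n - 1 → a • (ub - vb) ≠ 0) := by
  haveI : NeZero n := ⟨by omega⟩
  -- each fiber has at most n-1 elements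
  have hfib : ∀ v : ZMod n, (X.filter (fun x => f x = v)).card ≤ n - 1 := by
    intro v
    by_contra hcon
    push_neg at hcon
    obtain ⟨D, hD1, hD2⟩ := Finset.exists_subset_card_eq
      (show n ≤ (X.filter (fun x => f x = v)).card by omega)
    refine hno D (hD1.trans (filter_subset _ _)) hD2 ?_
    have : ∀ x ∈ D, f x = v := fun x hx => (mem_filter.mp (hD1 hx)).2
    rw [Finset.sum_congr rfl this, sum_const, hD2]
    simp [ZMod.natCast_self]
  -- image has at most 2 elements
  have himg : (X.image f).card ≤ 2 := by
    by_cases h3 : 3 ≤ n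
    · by_contra hcon
      push_neg at hcon
      obtain ⟨D, hD1, hD2, hD3⟩ := hst h3 X f hX (by omega)
      exact hno D hD1 hD2 hD3
    · calc (X.image f).card ≤ Fintype.card (ZMod n) := by
            simpa using Finset.card_le_card (Finset.subset_univ (X.image f))
        _ ≤ 2 := by rw [ZMod.card]; omega
  -- image has exactly 2 elements
  have hcard2 : (X.image f).card = 2 := by
    have hsum := Finset.card_eq_sum_card_fiberwise
      (f := f) (s := X) (t := X.image f) (fun x hx => mem_image_of_mem f hx)
    have hbound : X.card ≤ (X.image f).card * (n - 1) := by
      rw [hsum]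
      calc ∑ v ∈ X.image f, (X.filter (fun x => f x = v)).card
          ≤ ∑ _v ∈ X.image f, (n - 1) := Finset.sum_le_sum (fun v _ => hfib v)
        _ = (X.image f).card * (n - 1) := by rw [sum_const, smul_eq_mul]
    interval_cases h : (X.image f).card <;> omega
  obtain ⟨ub, vb, hne, himgeq⟩ := Finset.card_eq_two.mp hcard2
  have hmem : ∀ x ∈ X, f x = ub ∨ f x = vb := by
    intro x hx
    have : f x ∈ X.image f := mem_image_of_mem f hx
    rw [himgeq] at this
    simpa using this
  have hfibs : (X.filter (fun x => f x = ub)).card = n - 1 ∧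
      (X.filter (fun x => f x = vb)).card = n - 1 := by
    have hsum := Finset.card_eq_sum_card_fiberwise
      (f := f) (s := X) (t := X.image f) (fun x hx => mem_image_of_mem f hx)
    rw [himgeq] at hsum
    rw [Finset.sum_pair hne] at hsum
    have h1 := hfib ub; have h2 := hfib vb
    constructor <;> omega
  refine ⟨ub, vb, hne, hfibs.1, hfibs.2, hmem, ?_⟩
  intro a ha1 ha2 hzero
  obtain ⟨A, hA1, hA2⟩ := Finset.exists_subset_card_eq
    (show a ≤ (X.filter (fun x => f x = ub)).card by omega)
  obtain ⟨B, hB1, hB2⟩ := Finset.exists_subset_card_eq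
    (show n - a ≤ (X.filter (fun x => f x = vb)).card by omega)
  have hdisj : Disjoint A B := by
    refine Finset.disjoint_left.mpr (fun x hxA hxB => ?_)
    have h1 := (mem_filter.mp (hA1 hxA)).2
    have h2 := (mem_filter.mp (hB1 hxB)).2
    exact hne (h1 ▸ h2 ▸ rfl)
  refine hno (A ∪ B) (Finset.union_subset (hA1.trans (filter_subset _ _))
    (hB1.trans (filter_subset _ _))) (by rw [card_union_of_disjoint hdisj, hA2, hB2]; omega) ?_
  rw [Finset.sum_union hdisj]
  have e1 : ∑ x ∈ A, f x = a • ub := by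
    rw [Finset.sum_congr rfl (fun x hx => (mem_filter.mp (hA1 hx)).2), sum_const, hA2]
  have e2 : ∑ x ∈ B, f x = (n - a) • vb := by
    rw [Finset.sum_congr rfl (fun x hx => (mem_filter.mp (hB1 hx)).2), sum_const, hB2]
  rw [e1, e2]
  have h5 : (n - a) • vb = n • vb + -(a • vb) := sub_nsmul vb (by omega)
  have hn0 : n • vb = 0 := by
    simp [nsmul_eq_mul, ZMod.natCast_self]
  rw [h5, hn0, zero_add]
  rw [smul_sub] at hzero
  calc a • ub + -(a • vb) = a • ub - a • vb := by ring
    _ = 0 := hzero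


variable {α : Type u} [DecidableEq α]

def nsum {m : ℕ} (Δ : α → ZMod m) (T : Finset α) : ℕ := ∑ x ∈ T, (Δ x).val

def cval (q p : ℕ) {m : ℕ} (Δ : α → ZMod m) (T : Finset α) : ZMod p :=
  ((nsum Δ T / q : ℕ) : ZMod p)

def Fam (q : ℕ) {m : ℕ} (S : Finset α) (Δ : α → ZMod m) (𝒜 : Finset (Finset α)) : Prop :=
  (𝒜 : Set (Finset α)).Pairwise Disjoint ∧
    ∀ B ∈ 𝒜, B ⊆ S ∧ B.card = q ∧ q ∣ nsum Δ B

lemma extraction {q p m : ℕ} {S : Finset α} {Δ : α → ZMod m} [NeZero q]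
    (hm : m = q * p) (hq : 1 ≤ q) (hS : S.card = 2 * m - 2) :
    ∀ k ≤ 2 * p - 2, ∃ 𝒜 : Finset (Finset α), 𝒜.card = k ∧ Fam q S Δ 𝒜 := by
  intro k hk
  induction' k with k ih
  · exact ⟨∅, by simp, by simp [Fam], by simp⟩
  obtain ⟨𝒜, h𝒜card, h𝒜disj, h𝒜⟩ := ih (Nat.le_of_succ_le hk)
  have hle : 2 * q - 1 ≤ (S \ 𝒜.biUnion id).card := by
    have hbd : (𝒜.biUnion id).card ≤ k * q := by
      refine (card_biUnion_le).trans ?_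
      have : ∀ B ∈ 𝒜, (id B).card = q := fun B hB => (h𝒜 B hB).2.1
      rw [Finset.sum_congr rfl this, sum_const, h𝒜card, smul_eq_mul]
    have key : k * q + 2 * q + 1 ≤ 2 * (q * p) := by
      have h4 : (k + 3) * q ≤ (2 * p) * q := Nat.mul_le_mul_right q (by omega)
      nlinarith [hq]
    have h2 := le_card_sdiff (𝒜.biUnion id) S
    rw [hS, hm] at *
    omega
  obtain ⟨D, hDsub, hDcard, hDsum⟩ :=
    ZMod.erdos_ginzburg_ziv (n := q) (s := S \ 𝒜.biUnion id)
      (fun x => ((Δ x).val : ZMod q)) hle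
  have hDdvd : q ∣ nsum Δ D := by
    rw [show (∑ x ∈ D, ((Δ x).val : ZMod q)) = ((nsum Δ D : ℕ) : ZMod q) by
      unfold nsum; push_cast; rfl, ZMod.natCast_eq_zero_iff] at hDsum
    exact hDsum
  have hDS : D ⊆ S := hDsub.trans sdiff_subset
  have hDdisj : ∀ B ∈ 𝒜, Disjoint D B := by
    intro B hB
    exact (sdiff_disjoint.mono hDsub (subset_biUnion_of_mem id hB))
  have hDnotmem : D ∉ 𝒜 := by
    intro hmem
    have := hDdisj D hmem
    rw [disjoint_self] at this
    rw [this] at hDcard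
    simp only [Finset.bot_eq_empty, card_empty] at hDcard
    omega
  refine ⟨insert D 𝒜, by rw [card_insert_of_notMem hDnotmem, h𝒜card], ?_, ?_⟩
  · simp only [coe_insert, Set.pairwise_insert_of_symmetric, mem_coe]
    exact ⟨h𝒜disj, fun B hB _ => hDdisj B hB⟩
  · intro B hB
    rcases Finset.mem_insert.mp hB with rfl | hB
    · exact ⟨hDS, hDcard, hDdvd⟩
    · exact h𝒜 B hB

structure Setup (q p m : ℕ) (S : Finset α) (Δ : α → ZMod m)
    (𝒜 : Finset (Finset α)) : Prop where
  hm : m = q * p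
  hq : 2 ≤ q
  hp : 2 ≤ p
  hS : S.card = 2 * m - 2
  H : ∀ T ⊆ S, T.card = m → (∑ x ∈ T, Δ x) ≠ 0
  fam : Fam q S Δ 𝒜
  hcard : 𝒜.card = 2 * p - 2

namespace Setup

variable {q p m : ℕ} {S : Finset α} {Δ : α → ZMod m} {𝒜 : Finset (Finset α)}

lemma neZq (st : Setup q p m S Δ 𝒜) : NeZero q := ⟨by have := st.hq; omega⟩
lemma neZp (st : Setup q p m S Δ 𝒜) : NeZero p := ⟨by have := st.hp; omega⟩
lemma neZm (st : Setup q p m S Δ 𝒜) : NeZero m := ⟨by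
  have h1 := st.hq; have h2 := st.hp; have h3 := st.hm; nlinarith⟩

lemma sum_delta_eq' (st : Setup q p m S Δ 𝒜) (T : Finset α) :
    ∑ x ∈ T, Δ x = ((nsum Δ T : ℕ) : ZMod m) := by
  haveI := st.neZm
  unfold nsum
  push_cast
  refine Finset.sum_congr rfl fun x _ => ?_
  rw [ZMod.natCast_val, ZMod.cast_id']
  rfl

lemma sum_cl_zero_iff' (st : Setup q p m S Δ 𝒜) (T : Finset α) :
    (∑ x ∈ T, ((Δ x).val : ZMod q)) = 0 ↔ q ∣ nsum Δ T := by
  haveI := st.neZq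
  rw [show (∑ x ∈ T, ((Δ x).val : ZMod q)) = ((nsum Δ T : ℕ) : ZMod q) by
    unfold nsum; push_cast; rfl, ZMod.natCast_eq_zero_iff]

/-- the "no p disjoint blocks with zero quotient-sum" principle -/
lemma fam_win (st : Setup q p m S Δ 𝒜)
    {𝒯 : Finset (Finset α)} (hF : Fam q S Δ 𝒯) (hcard : 𝒯.card = p)
    (hsum : ∑ B ∈ 𝒯, cval q p Δ B = 0) : False := by
  haveI := st.neZm; haveI := st.neZp
  obtain ⟨hdisj, hmem⟩ := hF
  set T := 𝒯.biUnion (fun B => B) with hT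
  have hTS : T ⊆ S := by
    simp only [hT, biUnion_subset]
    exact fun B hB => (hmem B hB).1
  have hTcard : T.card = m := by
    rw [hT, card_biUnion (fun x hx y hy hxy => hdisj hx hy hxy)]
    rw [Finset.sum_congr rfl (fun B hB => (hmem B hB).2.1)]
    simp [hcard, st.hm, mul_comm]
  have hnsum : nsum Δ T = ∑ B ∈ 𝒯, nsum Δ B :=
    Finset.sum_biUnion (fun x hx y hy hxy => hdisj hx hy hxy)
  have h2 : nsum Δ T = q * ∑ B ∈ 𝒯, (nsum Δ B / q) := by
    rw [hnsum, Finset.mul_sum]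
    exact Finset.sum_congr rfl fun B hB => (Nat.mul_div_cancel' (hmem B hB).2.2).symm
  have hpd : p ∣ ∑ B ∈ 𝒯, (nsum Δ B / q) := by
    rw [← ZMod.natCast_eq_zero_iff]
    push_cast
    exact hsum
  have hmd : m ∣ nsum Δ T := by
    rw [h2]; exact dvd_trans (dvd_of_eq st.hm) (mul_dvd_mul_left q hpd)
  exact st.H T hTS hTcard (by
    rw [st.sum_delta_eq', ZMod.natCast_eq_zero_iff]; exact hmd)

lemma bu_sub (st : Setup q p m S Δ 𝒜) : 𝒜.biUnion id ⊆ S := by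
  simp only [biUnion_subset]
  exact fun B hB => (st.fam.2 B hB).1

lemma bu_card (st : Setup q p m S Δ 𝒜) : (𝒜.biUnion id).card = (2 * p - 2) * q := by
  rw [show (𝒜.biUnion id).card = ∑ B ∈ 𝒜, (id B).card from
    card_biUnion (fun x hx y hy hxy => st.fam.1 hx hy hxy)]
  have : ∀ B ∈ 𝒜, (id B).card = q := fun B hB => (st.fam.2 B hB).2.1
  rw [Finset.sum_congr rfl this, sum_const, st.hcard, smul_eq_mul]

lemma L_card (st : Setup q p m S Δ 𝒜) : (S \ 𝒜.biUnion id).card = 2 * q - 2 := by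
  rw [card_sdiff_of_subset st.bu_sub, st.bu_card, st.hS, st.hm]
  have h1 := st.hq; have h2 := st.hp
  have e1 : (2 * p - 2) * q + (2 * q - 2) = 2 * (q * p) - 2 := by
    have : (2 * p - 2) * q = 2 * p * q - 2 * q := by
      rw [Nat.sub_mul]
    rw [this]
    have h3 : 2 * q ≤ 2 * p * q := by nlinarith
    have h4 : 2 ≤ 2 * q := by omega
    have h5 : 2 * p * q = 2 * (q * p) := by ring
    omega
  omega

/-- an element of S not in any block is in L -/
lemma mem_L (st : Setup q p m S Δ 𝒜) {x : α} (hx : x ∈ S)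
    (h : ∀ B ∈ 𝒜, x ∉ B) : x ∈ S \ 𝒜.biUnion id := by
  rw [mem_sdiff]
  exact ⟨hx, by simp only [mem_biUnion, id]; push_neg; exact h⟩

/-- L contains no zero-sum q-subset (mod q) -/
lemma L_no (st : Setup q p m S Δ 𝒜) {D : Finset α} (hD : D ⊆ S \ 𝒜.biUnion id)
    (hDcard : D.card = q) (hDsum : (∑ x ∈ D, ((Δ x).val : ZMod q)) = 0) : False := by
  haveI := st.neZq
  have hDdvd : q ∣ nsum Δ D := (st.sum_cl_zero_iff' D).mp hDsum
  have hDS : D ⊆ S := hD.trans sdiff_subset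
  have hDdisj : ∀ B ∈ 𝒜, Disjoint D B := fun B hB =>
    sdiff_disjoint.mono hD (subset_biUnion_of_mem id hB)
  have hDnot : D ∉ 𝒜 := by
    intro hmem
    have := hDdisj D hmem
    rw [disjoint_self] at this
    rw [this] at hDcard
    simp only [Finset.bot_eq_empty, card_empty] at hDcard
    have := st.hq
    omega
  have hfam : Fam q S Δ (insert D 𝒜) := by
    constructor
    · simp only [coe_insert, Set.pairwise_insert_of_symmetric, mem_coe]
      exact ⟨st.fam.1, fun B hB _ => hDdisj B hB⟩
    · intro B hB
      rcases Finset.mem_insert.mp hB with rfl | hB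
      · exact ⟨hDS, hDcard, hDdvd⟩
      · exact st.fam.2 B hB
  have hicard : (insert D 𝒜).card = 2 * p - 1 := by
    rw [card_insert_of_notMem hDnot, st.hcard]
    have := st.hp; omega
  obtain ⟨𝒯, h𝒯1, h𝒯2, h𝒯3⟩ := ZMod.erdos_ginzburg_ziv (n := p) (s := insert D 𝒜)
    (cval q p Δ) (by rw [hicard])
  refine st.fam_win ⟨fun x hx y hy hxy => hfam.1 (h𝒯1 hx) (h𝒯1 hy) hxy,
    fun B hB => hfam.2 B (h𝒯1 hB)⟩ h𝒯2 h𝒯3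

/-- no p sub-blocks of 𝒜 with zero quotient-sum; specialized fam_win -/
lemma blocks_no (st : Setup q p m S Δ 𝒜) {𝒯 : Finset (Finset α)} (h : 𝒯 ⊆ 𝒜)
    (hcard : 𝒯.card = p) (hsum : ∑ B ∈ 𝒯, cval q p Δ B = 0) : False :=
  st.fam_win ⟨fun x hx y hy hxy => st.fam.1 (h hx) (h hy) hxy,
    fun B hB => st.fam.2 B (h hB)⟩ hcard hsum


/-- the leftover structure -/
lemma L_struct (st : Setup q p m S Δ 𝒜) (hstq : 3 ≤ q → Stmt.{u} q) :
    ∃ xb yb : ZMod q, xb ≠ yb ∧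
      ((S \ 𝒜.biUnion id).filter (fun x => ((Δ x).val : ZMod q) = xb)).card = q - 1 ∧
      ((S \ 𝒜.biUnion id).filter (fun x => ((Δ x).val : ZMod q) = yb)).card = q - 1 ∧
      (∀ x ∈ S \ 𝒜.biUnion id, ((Δ x).val : ZMod q) = xb ∨ ((Δ x).val : ZMod q) = yb) ∧
      (∀ a : ℕ, 1 ≤ a → a ≤ q - 1 → a • (xb - yb) ≠ 0) :=
  two_valued_struct st.hq _ _ st.L_card (fun D hD hDc hDs => st.L_no hD hDc hDs) hstq

/-- the block quotient-value structure -/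
lemma c_struct (st : Setup q p m S Δ 𝒜) (hstp : 3 ≤ p → Stmt.{u} p) :
    ∃ ub vb : ZMod p, ub ≠ vb ∧
      (𝒜.filter (fun B => cval q p Δ B = ub)).card = p - 1 ∧
      (𝒜.filter (fun B => cval q p Δ B = vb)).card = p - 1 ∧
      (∀ B ∈ 𝒜, cval q p Δ B = ub ∨ cval q p Δ B = vb) ∧
      (∀ a : ℕ, 1 ≤ a → a ≤ p - 1 → a • (ub - vb) ≠ 0) :=
  two_valued_struct st.hp _ _ st.hcard (fun D hD hDc hDs => st.blocks_no hD hDc hDs) hstp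

lemma P_disj (st : Setup q p m S Δ 𝒜) {B P : Finset α} (hB : B ∈ 𝒜)
    (hP : P ⊆ B ∪ (S \ 𝒜.biUnion id)) :
    ∀ B' ∈ 𝒜, B' ≠ B → Disjoint P B' := by
  intro B' hB' hne'
  refine Finset.disjoint_left.mpr (fun x hxP hxB' => ?_)
  rcases Finset.mem_union.mp (hP hxP) with h | h
  · exact (Finset.disjoint_left.mp (st.fam.1 (by exact hB') (by exact hB) hne') hxB') h
  · exact (mem_sdiff.mp h).2 (mem_biUnion.mpr ⟨B', hB', hxB'⟩)

lemma rigidity_aux (st : Setup q p m S Δ 𝒜) {u v : ZMod p}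
    (hufib : (𝒜.filter (fun B' => cval q p Δ B' = u)).card = p - 1)
    (hvfib : (𝒜.filter (fun B' => cval q p Δ B' = v)).card = p - 1)
    (hord : ∀ a : ℕ, 1 ≤ a → a ≤ p - 1 → a • (v - u) ≠ 0)
    {B P : Finset α} (hB : B ∈ 𝒜) (hcB : cval q p Δ B = u)
    (hP : P ⊆ B ∪ (S \ 𝒜.biUnion id)) (hPcard : P.card = q) (hPdvd : q ∣ nsum Δ P) :
    cval q p Δ P = u := by
  haveI := st.neZp
  set d := v - u with hd
  -- surjectivity of j ↦ u - j • d
  have hsurj : ∃ j < p, cval q p Δ P = u - j • d := by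
    have hinj : ∀ a ∈ Finset.range p, ∀ b ∈ Finset.range p,
        (fun (j : ℕ) => u - j • d) a = (fun (j : ℕ) => u - j • d) b → a = b := by
      intro a ha b hb hab
      simp only [mem_range] at ha hb
      simp only [sub_right_injective.eq_iff] at hab
      by_contra hne
      rcases Nat.lt_or_ge a b with h | h
      · have : (b - a) • d ≠ 0 := hord (b - a) (by omega) (by omega)
        have : (b - a) • d = 0 := by
          have := sub_nsmul d (le_of_lt h)
          rw [this, hab]
          simp
        tauto
      · have hlt : b < a := by omega
        have : (a - b) • d ≠ 0 := hord (a - b) (by omega) (by omega)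
        have : (a - b) • d = 0 := by
          have := sub_nsmul d (le_of_lt hlt)
          rw [this, hab]
          simp
        tauto
    have hcard : ((Finset.range p).image (fun (j : ℕ) => u - j • d)).card = p := by
      rw [Finset.card_image_of_injOn (fun a ha b hb => hinj a ha b hb), card_range]
    have huniv : ((Finset.range p).image (fun (j : ℕ) => u - j • d)) = Finset.univ := by
      apply Finset.eq_univ_of_card
      rw [hcard, ZMod.card]
    have : cval q p Δ P ∈ ((Finset.range p).image (fun (j : ℕ) => u - j • d)) := by
      rw [huniv]; exact mem_univ _
    obtain ⟨j, hj1, hj2⟩ := Finset.mem_image.mp this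
    exact ⟨j, mem_range.mp hj1, hj2.symm⟩
  obtain ⟨j, hjp, hjval⟩ := hsurj
  rcases Nat.eq_zero_or_pos j with rfl | hjpos
  · simpa using hjval
  -- now derive a contradiction
  exfalso
  have hp2 := st.hp
  have hq2 := st.hq
  -- select blocks
  have hBu : B ∈ 𝒜.filter (fun B' => cval q p Δ B' = u) := mem_filter.mpr ⟨hB, hcB⟩
  have herase : ((𝒜.filter (fun B' => cval q p Δ B' = u)).erase B).card = p - 2 := by
    rw [card_erase_of_mem hBu, hufib]
    omega
  obtain ⟨Au, hAu1, hAu2⟩ := Finset.exists_subset_card_eq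
    (show p - 1 - j ≤ ((𝒜.filter (fun B' => cval q p Δ B' = u)).erase B).card by omega)
  obtain ⟨Av, hAv1, hAv2⟩ := Finset.exists_subset_card_eq
    (show j ≤ (𝒜.filter (fun B' => cval q p Δ B' = v)).card by omega)
  have hAuA : Au ⊆ 𝒜 := hAu1.trans ((erase_subset _ _).trans (filter_subset _ _))
  have hAvA : Av ⊆ 𝒜 := hAv1.trans (filter_subset _ _)
  have huv : u ≠ v := by
    intro h
    exact hord 1 le_rfl (by omega) (by simp [hd, h])
  have hAuAv : Disjoint Au Av := by
    refine Finset.disjoint_left.mpr (fun C hC1 hC2 => ?_)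
    have e1 := (mem_filter.mp (Finset.mem_of_mem_erase (hAu1 hC1))).2
    have e2 := (mem_filter.mp (hAv1 hC2)).2
    exact huv (e1.symm.trans e2)
  have hBnotin : ∀ C ∈ Au ∪ Av, C ≠ B := by
    intro C hC
    rcases Finset.mem_union.mp hC with h | h
    · exact Finset.ne_of_mem_erase (hAu1 h)
    · intro heq
      have := (mem_filter.mp (hAv1 h)).2
      rw [heq, hcB] at this
      exact huv this
  have hPnot : P ∉ Au ∪ Av := by
    intro hmem
    have hd2 := st.P_disj hB hP P (Finset.mem_union.mp hmem |>.elim (fun h => hAuA h)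
      (fun h => hAvA h)) (hBnotin P hmem)
    rw [disjoint_self] at hd2
    rw [hd2] at hPcard
    simp only [Finset.bot_eq_empty, card_empty] at hPcard
    omega
  set 𝒯 := insert P (Au ∪ Av) with h𝒯
  have h𝒯card : 𝒯.card = p := by
    rw [h𝒯, card_insert_of_notMem hPnot, card_union_of_disjoint hAuAv, hAu2, hAv2]
    omega
  have hfam : Fam q S Δ 𝒯 := by
    constructor
    · intro x hx y hy hxy
      simp only [h𝒯, coe_insert, Set.mem_insert_iff, mem_coe] at hx hy
      rcases hx with rfl | hx <;> rcases hy with rfl | hy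
      · exact absurd rfl hxy
      · exact st.P_disj hB hP y (Finset.mem_union.mp hy |>.elim (fun h => hAuA h)
          (fun h => hAvA h)) (hBnotin y hy)
      · exact Disjoint.symm (st.P_disj hB hP x (Finset.mem_union.mp hx |>.elim
          (fun h => hAuA h) (fun h => hAvA h)) (hBnotin x hx))
      · exact st.fam.1 (by
          rcases Finset.mem_union.mp hx with h | h
          · exact mem_coe.mpr (hAuA h)
          · exact mem_coe.mpr (hAvA h)) (by
          rcases Finset.mem_union.mp hy with h | h
          · exact mem_coe.mpr (hAuA h)
          · exact mem_coe.mpr (hAvA h)) hxy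
    · intro C hC
      rcases Finset.mem_insert.mp hC with rfl | hC
      · exact ⟨hP.trans (Finset.union_subset (st.fam.2 B hB).1 sdiff_subset), hPcard, hPdvd⟩
      · rcases Finset.mem_union.mp hC with h | h
        · exact st.fam.2 C (hAuA h)
        · exact st.fam.2 C (hAvA h)
  refine st.fam_win hfam h𝒯card ?_
  rw [h𝒯, Finset.sum_insert hPnot, Finset.sum_union hAuAv]
  have e1 : ∑ C ∈ Au, cval q p Δ C = (p - 1 - j) • u := by
    rw [Finset.sum_congr rfl
      (fun C hC => (mem_filter.mp (Finset.mem_of_mem_erase (hAu1 hC))).2), sum_const, hAu2]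
  have e2 : ∑ C ∈ Av, cval q p Δ C = j • v := by
    rw [Finset.sum_congr rfl (fun C hC => (mem_filter.mp (hAv1 hC)).2), sum_const, hAv2]
  rw [hjval, e1, e2]
  have hv : v = u + d := by rw [hd]; ring
  rw [hv]
  have expand : j • (u + d) = j • u + j • d := smul_add j u d
  rw [expand]
  have e3 : (p - 1 - j) • u + (j • u + j • d) = (p - 1) • u + j • d := by
    rw [← add_assoc, ← add_nsmul]
    congr 2
    omega
  have e4 : u - j • d + ((p - 1 - j) • u + (j • u + j • d)) = u + (p-1) • u := by
    rw [e3]; ring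
  rw [e4, ← succ_nsmul']
  have : p - 1 + 1 = p := by omega
  rw [this]
  simp [nsmul_eq_mul, ZMod.natCast_self]

lemma rigidity (st : Setup q p m S Δ 𝒜) {ub vb : ZMod p} (hne : ub ≠ vb)
    (hufib : (𝒜.filter (fun B' => cval q p Δ B' = ub)).card = p - 1)
    (hvfib : (𝒜.filter (fun B' => cval q p Δ B' = vb)).card = p - 1)
    (hmem : ∀ B ∈ 𝒜, cval q p Δ B = ub ∨ cval q p Δ B = vb)
    (hord : ∀ a : ℕ, 1 ≤ a → a ≤ p - 1 → a • (ub - vb) ≠ 0)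
    {B P : Finset α} (hB : B ∈ 𝒜)
    (hP : P ⊆ B ∪ (S \ 𝒜.biUnion id)) (hPcard : P.card = q) (hPdvd : q ∣ nsum Δ P) :
    cval q p Δ P = cval q p Δ B := by
  have hord' : ∀ a : ℕ, 1 ≤ a → a ≤ p - 1 → a • (vb - ub) ≠ 0 := by
    intro a h1 h2 h
    refine hord a h1 h2 ?_
    have : a • (ub - vb) = -(a • (vb - ub)) := by
      rw [← smul_neg]; congr 1; ring
    rw [this, h, neg_zero]
  rcases hmem B hB with hcB | hcB
  · rw [hcB]
    exact st.rigidity_aux hufib hvfib hord' hB hcB hP hPcard hPdvd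
  · rw [hcB]
    exact st.rigidity_aux hvfib hufib hord hB hcB hP hPcard hPdvd


/-- E1: a block element and a leftover element in the same class have equal value.
Stated with the rigidity inputs as hypotheses. -/
lemma E1 (st : Setup q p m S Δ 𝒜) {ub vb : ZMod p} (hne : ub ≠ vb)
    (hufib : (𝒜.filter (fun B' => cval q p Δ B' = ub)).card = p - 1)
    (hvfib : (𝒜.filter (fun B' => cval q p Δ B' = vb)).card = p - 1)
    (hmem : ∀ B ∈ 𝒜, cval q p Δ B = ub ∨ cval q p Δ B = vb)
    (hord : ∀ a : ℕ, 1 ≤ a → a ≤ p - 1 → a • (ub - vb) ≠ 0)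
    {B : Finset α} (hB : B ∈ 𝒜) {t t' : α} (ht : t ∈ B)
    (ht' : t' ∈ S \ 𝒜.biUnion id)
    (hcl : ((Δ t).val : ZMod q) = ((Δ t').val : ZMod q)) : Δ t = Δ t' := by
  haveI := st.neZm; haveI := st.neZp; haveI := st.neZq
  have hq2 := st.hq
  have ht'B : t' ∉ B := fun h => (mem_sdiff.mp ht').2 (mem_biUnion.mpr ⟨B, hB, h⟩)
  set P := insert t' (B.erase t) with hPdef
  have ht'e : t' ∉ B.erase t := fun h => ht'B (Finset.mem_of_mem_erase h)
  have hPcard : P.card = q := by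
    rw [hPdef, card_insert_of_notMem ht'e, card_erase_of_mem ht]
    have := (st.fam.2 B hB).2.1
    omega
  have hsumswap : (∑ x ∈ P, ((Δ x).val : ZMod q)) = ∑ x ∈ B, ((Δ x).val : ZMod q) := by
    rw [hPdef, Finset.sum_insert ht'e,
      ← Finset.add_sum_erase B (fun x => ((Δ x).val : ZMod q)) ht, hcl]
  have hPdvd : q ∣ nsum Δ P := by
    rw [← st.sum_cl_zero_iff', hsumswap, st.sum_cl_zero_iff']
    exact (st.fam.2 B hB).2.2
  have hPsub : P ⊆ B ∪ (S \ 𝒜.biUnion id) := by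
    rw [hPdef]
    intro x hx
    rcases Finset.mem_insert.mp hx with rfl | hx
    · exact Finset.mem_union_right _ ht'
    · exact Finset.mem_union_left _ (Finset.mem_of_mem_erase hx)
  have hrig := st.rigidity hne hufib hvfib hmem hord hB hPsub hPcard hPdvd
  -- now extract value equality
  have hBdvd := (st.fam.2 B hB).2.2
  have hnsum1 : nsum Δ P = (Δ t').val + nsum Δ (B.erase t) := by
    rw [hPdef]; exact Finset.sum_insert ht'e
  have hnsum2 : nsum Δ B = (Δ t).val + nsum Δ (B.erase t) :=
    (Finset.add_sum_erase B (fun x => (Δ x).val) ht).symm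
  have hmodq : (nsum Δ P / q) ≡ (nsum Δ B / q) [MOD p] := by
    rw [← ZMod.natCast_eq_natCast_iff]
    exact hrig
  have hmodm : nsum Δ P ≡ nsum Δ B [MOD m] := by
    have h1 := Nat.ModEq.mul_left' (c := q) hmodq
    rw [Nat.mul_div_cancel' hPdvd, Nat.mul_div_cancel' hBdvd] at h1
    exact Nat.ModEq.of_dvd (dvd_of_eq st.hm) h1
  have hcast : ((nsum Δ P : ℕ) : ZMod m) = ((nsum Δ B : ℕ) : ZMod m) :=
    (ZMod.natCast_eq_natCast_iff _ _ _).mpr hmodm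
  have hval : (((Δ t).val : ℕ) : ZMod m) = (((Δ t').val : ℕ) : ZMod m) := by
    have e1 : ((nsum Δ P : ℕ) : ZMod m) = ((Δ t').val : ZMod m)
        + ((nsum Δ (B.erase t) : ℕ) : ZMod m) := by rw [hnsum1]; push_cast; ring
    have e2 : ((nsum Δ B : ℕ) : ZMod m) = ((Δ t).val : ZMod m)
        + ((nsum Δ (B.erase t) : ℕ) : ZMod m) := by rw [hnsum2]; push_cast; ring
    rw [e1, e2] at hcast
    exact (add_right_cancel hcast).symm
  rwa [ZMod.natCast_val, ZMod.cast_id', id_eq, ZMod.natCast_val, ZMod.cast_id', id_eq] at hval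


lemma equal_win (st : Setup q p m S Δ 𝒜) {w : ZMod m}
    (hcard : m ≤ (S.filter (fun x => Δ x = w)).card) : False := by
  haveI := st.neZm
  obtain ⟨T, hT1, hT2⟩ := Finset.exists_subset_card_eq hcard
  refine st.H T (hT1.trans (filter_subset _ _)) hT2 ?_
  rw [Finset.sum_congr rfl (fun x hx => (mem_filter.mp (hT1 hx)).2), sum_const, hT2]
  simp [nsmul_eq_mul, ZMod.natCast_self]

lemma beta_end (st : Setup q p m S Δ 𝒜)
    (hstq : 3 ≤ q → Stmt.{u} q) (hstp : 3 ≤ p → Stmt.{u} p)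
    (himg : (S.image (fun x => ((Δ x).val : ZMod q))).card ≤ 2)
    (hval : 3 ≤ (S.image Δ).card) : False := by
  haveI := st.neZm; haveI := st.neZp; haveI := st.neZq
  have hq2 := st.hq; have hp2 := st.hp
  classical
  set cl : α → ZMod q := fun x => ((Δ x).val : ZMod q) with hcl
  set L := S \ 𝒜.biUnion id with hL
  obtain ⟨xb, yb, hxyne, hxfib, hyfib, hLmem, hLord⟩ := st.L_struct hstq
  obtain ⟨ub, vb, huvne, hufib, hvfib, hcmem, hcord⟩ := st.c_struct hstp
  -- the two classes of S
  have hLsub : L ⊆ S := sdiff_subset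
  have hxwit : ∃ l ∈ L, cl l = xb := by
    have : 0 < (L.filter (fun x => cl x = xb)).card := by rw [hxfib]; omega
    obtain ⟨l, hl⟩ := Finset.card_pos.mp this
    exact ⟨l, (mem_filter.mp hl).1, (mem_filter.mp hl).2⟩
  have hywit : ∃ l ∈ L, cl l = yb := by
    have : 0 < (L.filter (fun x => cl x = yb)).card := by rw [hyfib]; omega
    obtain ⟨l, hl⟩ := Finset.card_pos.mp this
    exact ⟨l, (mem_filter.mp hl).1, (mem_filter.mp hl).2⟩
  have hSmem : ∀ x ∈ S, cl x = xb ∨ cl x = yb := by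
    intro x hx
    obtain ⟨lx, hlx, hlx2⟩ := hxwit
    obtain ⟨ly, hly, hly2⟩ := hywit
    have hpair : ({xb, yb} : Finset (ZMod q)) ⊆ S.image cl := by
      intro z hz
      rcases Finset.mem_insert.mp hz with rfl | hz
      · exact mem_image.mpr ⟨lx, hLsub hlx, hlx2⟩
      · rw [Finset.mem_singleton.mp hz]
        exact mem_image.mpr ⟨ly, hLsub hly, hly2⟩
    have hpcard : ({xb, yb} : Finset (ZMod q)).card = 2 := Finset.card_pair hxyne
    have : S.image cl = {xb, yb} := Finset.eq_of_subset_of_card_le hpair (by omega) |>.symm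
    have hx2 : cl x ∈ S.image cl := mem_image_of_mem cl hx
    rw [this] at hx2
    simpa using hx2
  by_cases hconst : ∀ u ∈ S, ∀ v ∈ S, cl u = cl v → Δ u = Δ v
  · -- then only ≤ 2 values total
    have hinj : (S.image Δ).card ≤ (S.image cl).card := by
      set g : ZMod m → ZMod q := fun δ =>
        if h : ∃ x ∈ S, Δ x = δ then cl h.choose else 0 with hg
      refine Finset.card_le_card_of_injOn g ?_ ?_
      · intro δ hδ
        obtain ⟨x, hx, hxδ⟩ := mem_image.mp hδ
        have hex : ∃ x ∈ S, Δ x = δ := ⟨x, hx, hxδ⟩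
        rw [hg]
        simp only [dif_pos hex]
        exact mem_image.mpr ⟨hex.choose, hex.choose_spec.1, rfl⟩
      · intro δ hδ δ' hδ' hgg
        obtain ⟨x, hx, hxδ⟩ := Finset.mem_coe.mp hδ |> mem_image.mp
        obtain ⟨x', hx', hxδ'⟩ := Finset.mem_coe.mp hδ' |> mem_image.mp
        have hex : ∃ y ∈ S, Δ y = δ := ⟨x, hx, hxδ⟩
        have hex' : ∃ y ∈ S, Δ y = δ' := ⟨x', hx', hxδ'⟩
        rw [hg] at hgg
        simp only [dif_pos hex, dif_pos hex'] at hgg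
        have := hconst _ hex.choose_spec.1 _ hex'.choose_spec.1 hgg
        rw [hex.choose_spec.2, hex'.choose_spec.2] at this
        exact this
    omega
  · push_neg at hconst
    obtain ⟨u, hu, v, hv, hcluv, hΔne⟩ := hconst
    -- common machinery
    have final : ∀ ob : ZMod q, ob ≠ cl u →
        ((L.filter (fun x => cl x = ob)).card = q - 1) → False := by
      intro ob hobne hobfib
      -- class of u has no block element
      have hnoblock : ∀ B ∈ 𝒜, ∀ t ∈ B, cl t ≠ cl u := by
        intro B hB t ht hclt
        -- get a leftover witness of class cl u
        have hcluS : cl u = xb ∨ cl u = yb := hSmem u hu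
        have hlwit : ∃ l ∈ L, cl l = cl u := by
          rcases hcluS with h | h
          · obtain ⟨l, h1, h2⟩ := hxwit; exact ⟨l, h1, h2.trans h.symm⟩
          · obtain ⟨l, h1, h2⟩ := hywit; exact ⟨l, h1, h2.trans h.symm⟩
        obtain ⟨l, hlL, hlcl⟩ := hlwit
        have key : ∀ a ∈ S, cl a = cl u → Δ a = Δ l := by
          intro a ha hcla
          by_cases haL : a ∈ L
          · -- both in L: go through the block element t
            have e1 := st.E1 huvne hufib hvfib hcmem hcord hB ht hlL (hclt.trans hlcl.symm)
            have e2 := st.E1 huvne hufib hvfib hcmem hcord hB ht haL (hclt.trans hcla.symm)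
            rw [← e2, e1]
          · have : a ∈ 𝒜.biUnion id := by
              by_contra hnot
              exact haL (st.mem_L ha (fun B' hB' hmem' => hnot (mem_biUnion.mpr ⟨B', hB', hmem'⟩)))
            obtain ⟨B', hB', ha'⟩ := mem_biUnion.mp this
            exact st.E1 huvne hufib hvfib hcmem hcord hB' ha' hlL (hcla.trans hlcl.symm)
        have := (key u hu rfl).trans (key v hv hcluv.symm).symm
        exact hΔne this
      -- all block elements have class ob... they have Δ = some fixed value
      have hAne : 𝒜.Nonempty := Finset.card_pos.mp (by rw [st.hcard]; omega)
      obtain ⟨B₀, hB₀⟩ := hAne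
      have hB₀ne : B₀.Nonempty := Finset.card_pos.mp (by rw [(st.fam.2 B₀ hB₀).2.1]; omega)
      obtain ⟨t₀, ht₀⟩ := hB₀ne
      have hobwit : ∃ l ∈ L, cl l = ob := by
        have : 0 < (L.filter (fun x => cl x = ob)).card := by rw [hobfib]; omega
        obtain ⟨l, hl⟩ := Finset.card_pos.mp this
        exact ⟨l, (mem_filter.mp hl).1, (mem_filter.mp hl).2⟩
      obtain ⟨lo, hloL, hlocl⟩ := hobwit
      have hblockcl : ∀ B ∈ 𝒜, ∀ t ∈ B, cl t = ob := by
        intro B hB t ht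
        have htS : t ∈ S := (st.fam.2 B hB).1 ht
        rcases hSmem t htS with h | h <;> rcases hSmem u hu with h' | h'
        · exact absurd (h.trans h'.symm) (hnoblock B hB t ht)
        · -- cl t = xb, cl u = yb: then ob must be xb
          rcases hSmem lo (hLsub hloL) with hh | hh
          · rw [h, ← hh, hlocl]
          · exfalso; exact hobne (hlocl.symm.trans (hh.trans h'.symm)) 
        · rcases hSmem lo (hLsub hloL) with hh | hh
          · exfalso; exact hobne (hlocl.symm.trans (hh.trans h'.symm))
          · rw [h, ← hh, hlocl]
        · exact absurd (h.trans h'.symm) (hnoblock B hB t ht)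
      -- all block elements have value Δ lo
      have hblockval : ∀ a ∈ 𝒜.biUnion id, Δ a = Δ lo := by
        intro a ha
        obtain ⟨B', hB', ha'⟩ := mem_biUnion.mp ha
        exact st.E1 huvne hufib hvfib hcmem hcord hB' ha' hloL
          ((hblockcl B' hB' a ha').trans hlocl.symm)
      have hsubfil : 𝒜.biUnion id ⊆ S.filter (fun x => Δ x = Δ lo) := by
        intro a ha
        exact mem_filter.mpr ⟨st.bu_sub ha, hblockval a ha⟩
      have hmcount : m ≤ (S.filter (fun x => Δ x = Δ lo)).card := by
        have h1 := Finset.card_le_card hsubfil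
        rw [st.bu_card] at h1
        have h2 : m ≤ (2 * p - 2) * q := by
          rw [st.hm]
          have : p ≤ 2 * p - 2 := by omega
          nlinarith
        omega
      exact st.equal_win hmcount
    rcases hSmem u hu with h | h
    · refine final yb ?_ hyfib
      intro hh; apply hxyne; rw [← h, ← hh]
    · refine final xb ?_ hxfib
      intro hh; apply hxyne; rw [hh, h]


/-- replacing one block by a new one gives a new Setup -/
lemma replace_block (st : Setup q p m S Δ 𝒜) {B₀ B' : Finset α} (hB₀ : B₀ ∈ 𝒜)
    (hB'sub : B' ⊆ B₀ ∪ (S \ 𝒜.biUnion id)) (hB'card : B'.card = q)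
    (hB'sum : (∑ x ∈ B', ((Δ x).val : ZMod q)) = 0) :
    Setup q p m S Δ (insert B' (𝒜.erase B₀)) := by
  haveI := st.neZq
  have hq2 := st.hq
  have hB'S : B' ⊆ S := hB'sub.trans (Finset.union_subset (st.fam.2 B₀ hB₀).1 sdiff_subset)
  have hB'dvd : q ∣ nsum Δ B' := (st.sum_cl_zero_iff' B').mp hB'sum
  have hdisj : ∀ C ∈ 𝒜.erase B₀, Disjoint B' C := by
    intro C hC
    exact st.P_disj hB₀ hB'sub C (Finset.mem_of_mem_erase hC) (Finset.ne_of_mem_erase hC)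
  have hB'not : B' ∉ 𝒜.erase B₀ := by
    intro hmem
    have := hdisj B' hmem
    rw [disjoint_self] at this
    rw [this] at hB'card
    simp only [Finset.bot_eq_empty, card_empty] at hB'card
    omega
  refine ⟨st.hm, st.hq, st.hp, st.hS, st.H, ⟨?_, ?_⟩, ?_⟩
  · simp only [coe_insert, Set.pairwise_insert_of_symmetric, mem_coe]
    refine ⟨fun x hx y hy hxy => st.fam.1 (mem_coe.mpr (Finset.mem_of_mem_erase hx))
      (mem_coe.mpr (Finset.mem_of_mem_erase hy)) hxy, fun C hC _ => hdisj C hC⟩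
  · intro C hC
    rcases Finset.mem_insert.mp hC with rfl | hC
    · exact ⟨hB'S, hB'card, hB'dvd⟩
    · exact st.fam.2 C (Finset.mem_of_mem_erase hC)
  · rw [card_insert_of_notMem hB'not, card_erase_of_mem hB₀, st.hcard]
    have := st.hp; omega

/-- membership in the new leftover -/
lemma mem_L' (st : Setup q p m S Δ 𝒜) {B₀ B' : Finset α} (hB₀ : B₀ ∈ 𝒜)
    {x : α} (hxS : x ∈ S) (hxB' : x ∉ B')
    (hx : x ∈ B₀ ∨ x ∈ S \ 𝒜.biUnion id) :
    x ∈ S \ (insert B' (𝒜.erase B₀)).biUnion id := by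
  rw [mem_sdiff]
  refine ⟨hxS, ?_⟩
  rw [mem_biUnion]
  rintro ⟨C, hC, hxC⟩
  rcases Finset.mem_insert.mp hC with rfl | hC
  · exact hxB' hxC
  · rcases hx with h | h
    · exact (Finset.disjoint_left.mp
        (st.fam.1 (mem_coe.mpr (Finset.mem_of_mem_erase hC)) (mem_coe.mpr hB₀)
          (Finset.ne_of_mem_erase hC)) hxC) h
    · exact (mem_sdiff.mp h).2 (mem_biUnion.mpr ⟨C, Finset.mem_of_mem_erase hC, hxC⟩)

/-- three leftover elements with pairwise distinct classes: impossible -/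
lemma three_classes_end (st : Setup q p m S Δ 𝒜) (hstq : 3 ≤ q → Stmt.{u} q)
    {a b c : α} (haL : a ∈ S \ 𝒜.biUnion id) (hbL : b ∈ S \ 𝒜.biUnion id)
    (hcL : c ∈ S \ 𝒜.biUnion id)
    (hab : ((Δ a).val : ZMod q) ≠ ((Δ b).val : ZMod q))
    (hac : ((Δ a).val : ZMod q) ≠ ((Δ c).val : ZMod q))
    (hbc : ((Δ b).val : ZMod q) ≠ ((Δ c).val : ZMod q)) : False := by
  obtain ⟨xb, yb, hxyne, hxfib, hyfib, hLmem, hLord⟩ := st.L_struct hstq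
  have h1 := hLmem a haL
  have h2 := hLmem b hbL
  have h3 := hLmem c hcL
  rcases h1 with h1 | h1 <;> rcases h2 with h2 | h2 <;> rcases h3 with h3 | h3 <;>
    first
      | exact hab (h1.trans h2.symm)
      | exact hac (h1.trans h3.symm)
      | exact hbc (h2.trans h3.symm)


/-- common part: getting an off-class element inside a block -/
lemma exists_offclass (st : Setup q p m S Δ 𝒜) {xb yb : ZMod q}
    (hLmem : ∀ x ∈ S \ 𝒜.biUnion id,
      ((Δ x).val : ZMod q) = xb ∨ ((Δ x).val : ZMod q) = yb)
    (himg3 : 3 ≤ (S.image (fun x => ((Δ x).val : ZMod q))).card) :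
    ∃ B₀ ∈ 𝒜, ∃ t ∈ B₀, ((Δ t).val : ZMod q) ≠ xb ∧ ((Δ t).val : ZMod q) ≠ yb := by
  have hnot : ¬ (S.image (fun x => ((Δ x).val : ZMod q)) ⊆ {xb, yb}) := by
    intro hsub
    have h1 := Finset.card_le_card hsub
    have h2 : ({xb, yb} : Finset (ZMod q)).card ≤ 2 := Finset.card_insert_le _ _ |>.trans
      (by simp)
    omega
  obtain ⟨c, hc, hcnot⟩ := Finset.not_subset.mp hnot
  obtain ⟨t, htS, htc⟩ := mem_image.mp hc
  simp only [Finset.mem_insert, Finset.mem_singleton] at hcnot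
  push_neg at hcnot
  have htbu : t ∈ 𝒜.biUnion id := by
    by_contra hnot2
    have htL : t ∈ S \ 𝒜.biUnion id := mem_sdiff.mpr ⟨htS, hnot2⟩
    rcases hLmem t htL with h | h
    · exact hcnot.1 (htc ▸ h)
    · exact hcnot.2 (htc ▸ h)
  obtain ⟨B₀, hB₀, ht⟩ := mem_biUnion.mp htbu
  exact ⟨B₀, hB₀, t, ht, htc.symm ▸ hcnot.1, htc.symm ▸ hcnot.2⟩

/-- fiber witnesses in L -/
lemma fiber_wit (st : Setup q p m S Δ 𝒜) {zb : ZMod q}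
    (hfib : ((S \ 𝒜.biUnion id).filter
      (fun x => ((Δ x).val : ZMod q) = zb)).card = q - 1) :
    ∃ l ∈ S \ 𝒜.biUnion id, ((Δ l).val : ZMod q) = zb := by
  have hq2 := st.hq
  have : 0 < ((S \ 𝒜.biUnion id).filter
      (fun x => ((Δ x).val : ZMod q) = zb)).card := by omega
  obtain ⟨l, hl⟩ := Finset.card_pos.mp this
  exact ⟨l, (mem_filter.mp hl).1, (mem_filter.mp hl).2⟩

/-- the α-ending for q ≥ 4 -/
lemma alpha_general (st : Setup q p m S Δ 𝒜) (hstq : 3 ≤ q → Stmt.{u} q)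
    (hq4 : 4 ≤ q)
    (himg3 : 3 ≤ (S.image (fun x => ((Δ x).val : ZMod q))).card) : False := by
  haveI := st.neZq
  have hq2 := st.hq
  obtain ⟨xb, yb, hxyne, hxfib, hyfib, hLmem, hLord⟩ := st.L_struct hstq
  obtain ⟨B₀, hB₀, t, ht, htx, hty⟩ := st.exists_offclass hLmem himg3
  obtain ⟨l₁, hl₁L, hl₁c⟩ := st.fiber_wit hxfib
  obtain ⟨l₂, hl₂L, hl₂c⟩ := st.fiber_wit hyfib
  set L := S \ 𝒜.biUnion id with hLdef
  have hB₀L : Disjoint B₀ L := by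
    refine Finset.disjoint_left.mpr (fun x hx1 hx2 => ?_)
    exact (mem_sdiff.mp hx2).2 (mem_biUnion.mpr ⟨B₀, hB₀, hx1⟩)
  have hB₀card : B₀.card = q := (st.fam.2 B₀ hB₀).2.1
  have htl₁ : t ≠ l₁ := fun h => (Finset.disjoint_left.mp hB₀L ht) (h ▸ hl₁L)
  have htl₂ : t ≠ l₂ := fun h => (Finset.disjoint_left.mp hB₀L ht) (h ▸ hl₂L)
  have hl₁l₂ : l₁ ≠ l₂ := fun h => hxyne (hl₁c.symm.trans (h ▸ hl₂c))
  set pool := (B₀ ∪ L) \ {t, l₁, l₂} with hpool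
  have hpoolcard : 2 * q - 1 ≤ pool.card := by
    have h1 : (B₀ ∪ L).card = q + (2 * q - 2) := by
      rw [card_union_of_disjoint hB₀L, hB₀card, st.L_card]
    have h2 : ({t, l₁, l₂} : Finset α).card = 3 := by
      rw [card_insert_of_notMem (by simp [htl₁, htl₂]),
        card_insert_of_notMem (by simp [hl₁l₂]), card_singleton]
    have h3 : ({t, l₁, l₂} : Finset α) ⊆ B₀ ∪ L := by
      intro x hx
      simp only [Finset.mem_insert, Finset.mem_singleton] at hx
      rcases hx with rfl | rfl | rfl
      · exact Finset.mem_union_left _ ht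
      · exact Finset.mem_union_right _ hl₁L
      · exact Finset.mem_union_right _ hl₂L
    rw [hpool, card_sdiff_of_subset h3, h1, h2]
    omega
  obtain ⟨B', hB'sub, hB'card, hB'sum⟩ := ZMod.erdos_ginzburg_ziv (n := q) (s := pool)
    (fun x => ((Δ x).val : ZMod q)) hpoolcard
  have hB'pool : B' ⊆ B₀ ∪ L := hB'sub.trans sdiff_subset
  have st' := st.replace_block hB₀ hB'pool hB'card hB'sum
  have hnotB' : ∀ x ∈ ({t, l₁, l₂} : Finset α), x ∉ B' := by
    intro x hx hxB'
    exact (mem_sdiff.mp (hB'sub hxB')).2 hx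
  have htL' : t ∈ S \ (insert B' (𝒜.erase B₀)).biUnion id :=
    st.mem_L' hB₀ ((st.fam.2 B₀ hB₀).1 ht) (hnotB' t (by simp)) (Or.inl ht)
  have hl₁L' : l₁ ∈ S \ (insert B' (𝒜.erase B₀)).biUnion id :=
    st.mem_L' hB₀ (sdiff_subset hl₁L) (hnotB' l₁ (by simp)) (Or.inr hl₁L)
  have hl₂L' : l₂ ∈ S \ (insert B' (𝒜.erase B₀)).biUnion id :=
    st.mem_L' hB₀ (sdiff_subset hl₂L) (hnotB' l₂ (by simp)) (Or.inr hl₂L)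
  exact st'.three_classes_end hstq htL' hl₁L' hl₂L'
    (fun h => htx (h.trans hl₁c)) (fun h => hty (h.trans hl₂c))
    (fun h => hxyne (hl₁c.symm.trans (h.trans hl₂c)))


/-- the α-ending for q = 3 -/
lemma alpha3 (st : Setup q p m S Δ 𝒜) (hstq : 3 ≤ q → Stmt.{u} q)
    (hq3 : q = 3)
    (himg3 : 3 ≤ (S.image (fun x => ((Δ x).val : ZMod q))).card) : False := by
  subst hq3
  obtain ⟨xb, yb, hxyne, hxfib, hyfib, hLmem, hLord⟩ := st.L_struct hstq
  obtain ⟨B₀, hB₀, t, ht, htx, hty⟩ := st.exists_offclass hLmem himg3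
  set L := S \ 𝒜.biUnion id with hLdef
  have hB₀L : Disjoint B₀ L := by
    refine Finset.disjoint_left.mpr (fun x hx1 hx2 => ?_)
    exact (mem_sdiff.mp hx2).2 (mem_biUnion.mpr ⟨B₀, hB₀, hx1⟩)
  have hB₀card : B₀.card = 3 := (st.fam.2 B₀ hB₀).2.1
  have hB₀S : B₀ ⊆ S := (st.fam.2 B₀ hB₀).1
  -- the two fibers are pairs
  have hx2 : (L.filter (fun x => ((Δ x).val : ZMod 3) = xb)).card = 2 := by omega
  have hy2 : (L.filter (fun x => ((Δ x).val : ZMod 3) = yb)).card = 2 := by omega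
  obtain ⟨l₁, l₁', hl₁ne, hxpair⟩ := Finset.card_eq_two.mp hx2
  obtain ⟨l₂, l₂', hl₂ne, hypair⟩ := Finset.card_eq_two.mp hy2
  have hl₁mem : l₁ ∈ L ∧ ((Δ l₁).val : ZMod 3) = xb := by
    have : l₁ ∈ L.filter (fun x => ((Δ x).val : ZMod 3) = xb) := by rw [hxpair]; simp
    exact ⟨(mem_filter.mp this).1, (mem_filter.mp this).2⟩
  have hl₁'mem : l₁' ∈ L ∧ ((Δ l₁').val : ZMod 3) = xb := by
    have : l₁' ∈ L.filter (fun x => ((Δ x).val : ZMod 3) = xb) := by rw [hxpair]; simp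
    exact ⟨(mem_filter.mp this).1, (mem_filter.mp this).2⟩
  have hl₂mem : l₂ ∈ L ∧ ((Δ l₂).val : ZMod 3) = yb := by
    have : l₂ ∈ L.filter (fun x => ((Δ x).val : ZMod 3) = yb) := by rw [hypair]; simp
    exact ⟨(mem_filter.mp this).1, (mem_filter.mp this).2⟩
  have hl₂'mem : l₂' ∈ L ∧ ((Δ l₂').val : ZMod 3) = yb := by
    have : l₂' ∈ L.filter (fun x => ((Δ x).val : ZMod 3) = yb) := by rw [hypair]; simp
    exact ⟨(mem_filter.mp this).1, (mem_filter.mp this).2⟩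
  -- the other two elements of B₀
  have hBe : (B₀.erase t).card = 2 := by rw [card_erase_of_mem ht, hB₀card]
  obtain ⟨u₁, u₂, hune, hepair⟩ := Finset.card_eq_two.mp hBe
  have hu₁e : u₁ ∈ B₀.erase t := by rw [hepair]; simp
  have hu₂e : u₂ ∈ B₀.erase t := by rw [hepair]; simp
  have hu₁B : u₁ ∈ B₀ := Finset.mem_of_mem_erase hu₁e
  have hu₂B : u₂ ∈ B₀ := Finset.mem_of_mem_erase hu₂e
  have htne : t ∉ B₀.erase t := Finset.notMem_erase t B₀
  have hsum0 : ((Δ t).val : ZMod 3) + (((Δ u₁).val : ZMod 3) + ((Δ u₂).val : ZMod 3)) = 0 := by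
    have h0 : (∑ x ∈ B₀, ((Δ x).val : ZMod 3)) = 0 :=
      (st.sum_cl_zero_iff' B₀).mpr (st.fam.2 B₀ hB₀).2.2
    rw [show B₀ = insert t (B₀.erase t) from (Finset.insert_erase ht).symm] at h0
    rw [Finset.sum_insert htne, hepair, Finset.sum_pair hune] at h0
    exact h0
  -- elements of B₀ are determined
  have hB₀elts : ∀ x ∈ B₀, x = t ∨ x = u₁ ∨ x = u₂ := by
    intro x hx
    by_cases hxt : x = t
    · exact Or.inl hxt
    · have : x ∈ B₀.erase t := Finset.mem_erase.mpr ⟨hxt, hx⟩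
      rw [hepair] at this
      simp only [Finset.mem_insert, Finset.mem_singleton] at this
      exact Or.inr this
  -- classification
  have tri : ∀ w : ZMod 3, w = xb ∨ w = yb ∨ w = ((Δ t).val : ZMod 3) := by
    have key : ∀ a b c w : ZMod 3, a ≠ b → c ≠ a → c ≠ b → (w = a ∨ w = b ∨ w = c) := by decide
    exact fun w => key xb yb _ w hxyne htx hty
  -- the mixed case, factored with symmetric roles
  have mixed : ∀ (ab bb : ZMod 3) (la la' lb lb' : α), ab ≠ bb →
      la ∈ L → la' ∈ L → lb ∈ L → lb' ∈ L → la ≠ la' → lb ≠ lb' →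
      ((Δ la).val : ZMod 3) = ab → ((Δ la').val : ZMod 3) = ab →
      ((Δ lb).val : ZMod 3) = bb → ((Δ lb').val : ZMod 3) = bb →
      ((Δ u₁).val : ZMod 3) = ab → ((Δ u₂).val : ZMod 3) = bb → False := by
    intro ab bb la la' lb lb' hab hlaL hla'L hlbL hlb'L hlane hlbne hla hla' hlb hlb' hc1 hc2
    have hu₁la : u₁ ∉ ({la, la'} : Finset α) := by
      intro hmem
      simp only [Finset.mem_insert, Finset.mem_singleton] at hmem
      rcases hmem with rfl | rfl
      · exact (Finset.disjoint_left.mp hB₀L hu₁B) hlaL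
      · exact (Finset.disjoint_left.mp hB₀L hu₁B) hla'L
    set Bs := insert u₁ ({la, la'} : Finset α) with hBs
    have hBscard : Bs.card = 3 := by
      rw [hBs, card_insert_of_notMem hu₁la, card_insert_of_notMem (by simp [hlane]),
        card_singleton]
    have hBssub : Bs ⊆ B₀ ∪ L := by
      intro x hx
      rw [hBs] at hx
      simp only [Finset.mem_insert, Finset.mem_singleton] at hx
      rcases hx with rfl | rfl | rfl
      · exact Finset.mem_union_left _ hu₁B
      · exact Finset.mem_union_right _ hlaL
      · exact Finset.mem_union_right _ hla'L
    have hBssum : (∑ x ∈ Bs, ((Δ x).val : ZMod 3)) = 0 := by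
      rw [hBs, Finset.sum_insert hu₁la, Finset.sum_pair hlane, hc1, hla, hla']
      have : ∀ w : ZMod 3, w + (w + w) = 0 := by decide
      exact this ab
    have st2 := st.replace_block hB₀ hBssub hBscard hBssum
    -- the set D of three bb-class elements in the new leftover
    have hu₂Bs : u₂ ∉ Bs := by
      rw [hBs]
      simp only [Finset.mem_insert, Finset.mem_singleton]
      push_neg
      refine ⟨Ne.symm hune, ?_, ?_⟩
      · intro h; exact (Finset.disjoint_left.mp hB₀L hu₂B) (h ▸ hlaL)
      · intro h; exact (Finset.disjoint_left.mp hB₀L hu₂B) (h ▸ hla'L)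
    have hlbBs : lb ∉ Bs := by
      rw [hBs]
      simp only [Finset.mem_insert, Finset.mem_singleton]
      push_neg
      refine ⟨?_, ?_, ?_⟩ <;> intro h
      · exact (Finset.disjoint_left.mp hB₀L hu₁B) (h ▸ hlbL)
      · exact hab (hla ▸ h ▸ hlb)
      · exact hab (hla' ▸ h ▸ hlb)
    have hlb'Bs : lb' ∉ Bs := by
      rw [hBs]
      simp only [Finset.mem_insert, Finset.mem_singleton]
      push_neg
      refine ⟨?_, ?_, ?_⟩ <;> intro h
      · exact (Finset.disjoint_left.mp hB₀L hu₁B) (h ▸ hlb'L)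
      · exact hab (hla ▸ h ▸ hlb')
      · exact hab (hla' ▸ h ▸ hlb')
    have hlbL2 : lb ∈ S \ (insert Bs (𝒜.erase B₀)).biUnion id :=
      st.mem_L' hB₀ (sdiff_subset hlbL) hlbBs (Or.inr hlbL)
    have hlb'L2 : lb' ∈ S \ (insert Bs (𝒜.erase B₀)).biUnion id :=
      st.mem_L' hB₀ (sdiff_subset hlb'L) hlb'Bs (Or.inr hlb'L)
    have hu₂L2 : u₂ ∈ S \ (insert Bs (𝒜.erase B₀)).biUnion id :=
      st.mem_L' hB₀ (hB₀S hu₂B) hu₂Bs (Or.inl hu₂B)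
    have hu₂lb : u₂ ∉ ({lb, lb'} : Finset α) := by
      simp only [Finset.mem_insert, Finset.mem_singleton]
      push_neg
      constructor <;> intro h
      · exact (Finset.disjoint_left.mp hB₀L hu₂B) (h ▸ hlbL)
      · exact (Finset.disjoint_left.mp hB₀L hu₂B) (h ▸ hlb'L)
    refine st2.L_no (D := insert u₂ ({lb, lb'} : Finset α)) ?_ ?_ ?_
    · intro x hx
      simp only [Finset.mem_insert, Finset.mem_singleton] at hx
      rcases hx with rfl | rfl | rfl
      · exact hu₂L2
      · exact hlbL2
      · exact hlb'L2
    · rw [card_insert_of_notMem hu₂lb, card_insert_of_notMem (by simp [hlbne]),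
        card_singleton]
    · rw [Finset.sum_insert hu₂lb, Finset.sum_pair hlbne, hc2, hlb, hlb']
      have : ∀ w : ZMod 3, w + (w + w) = 0 := by decide
      exact this bb
  -- now the case analysis on the class of u₁
  rcases tri ((Δ u₁).val : ZMod 3) with hc1 | hc1 | hc1
  · -- u₁ in class xb, so u₂ in class yb
    have hc2 : ((Δ u₂).val : ZMod 3) = yb := by
      have hall : ((Δ t).val : ZMod 3) + (xb + yb) = 0 := by
        have key : ∀ a b c : ZMod 3, a ≠ b → c ≠ a → c ≠ b → c + (a + b) = 0 := by decide
        exact key xb yb _ hxyne htx hty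
      rw [hc1] at hsum0
      have := hsum0.trans hall.symm
      exact add_left_cancel (add_left_cancel this)
    exact mixed xb yb l₁ l₁' l₂ l₂' hxyne hl₁mem.1 hl₁'mem.1 hl₂mem.1 hl₂'mem.1
      hl₁ne hl₂ne hl₁mem.2 hl₁'mem.2 hl₂mem.2 hl₂'mem.2 hc1 hc2
  · -- u₁ in class yb, so u₂ in class xb
    have hc2 : ((Δ u₂).val : ZMod 3) = xb := by
      have hall : ((Δ t).val : ZMod 3) + (yb + xb) = 0 := by
        have key : ∀ a b c : ZMod 3, a ≠ b → c ≠ a → c ≠ b → c + (b + a) = 0 := by decide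
        exact key xb yb _ hxyne htx hty
      rw [hc1] at hsum0
      have := hsum0.trans hall.symm
      exact add_left_cancel (add_left_cancel this)
    exact mixed yb xb l₂ l₂' l₁ l₁' (Ne.symm hxyne) hl₂mem.1 hl₂'mem.1 hl₁mem.1 hl₁'mem.1
      hl₂ne hl₁ne hl₂mem.2 hl₂'mem.2 hl₁mem.2 hl₁'mem.2 hc1 hc2
  · -- u₁ in class zb: pure block
    have hc2 : ((Δ u₂).val : ZMod 3) = ((Δ t).val : ZMod 3) := by
      rw [hc1] at hsum0
      have key : ∀ z w : ZMod 3, z + (z + w) = 0 → w = z := by decide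
      exact key _ _ hsum0
    -- every element of B₀ has class zb
    have hB₀cl : ∀ x ∈ B₀, ((Δ x).val : ZMod 3) = ((Δ t).val : ZMod 3) := by
      intro x hx
      rcases hB₀elts x hx with rfl | rfl | rfl
      · rfl
      · exact hc1
      · exact hc2
    -- the pool avoiding t and l₁
    have htl₁ : t ≠ l₁ := fun h => (Finset.disjoint_left.mp hB₀L ht) (h ▸ hl₁mem.1)
    set pool := (B₀ ∪ L) \ {t, l₁} with hpool
    have hpoolcard : 2 * 3 - 1 ≤ pool.card := by
      have h1 : (B₀ ∪ L).card = 3 + (2 * 3 - 2) := by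
        rw [card_union_of_disjoint hB₀L, hB₀card, st.L_card]
      have h2 : ({t, l₁} : Finset α).card = 2 := Finset.card_pair htl₁
      have h3 : ({t, l₁} : Finset α) ⊆ B₀ ∪ L := by
        intro x hx
        simp only [Finset.mem_insert, Finset.mem_singleton] at hx
        rcases hx with rfl | rfl
        · exact Finset.mem_union_left _ ht
        · exact Finset.mem_union_right _ hl₁mem.1
      rw [hpool, card_sdiff_of_subset h3, h1, h2]
    obtain ⟨B', hB'sub, hB'card, hB'sum⟩ := ZMod.erdos_ginzburg_ziv (n := 3) (s := pool)
      (fun x => ((Δ x).val : ZMod 3)) hpoolcard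
    have hB'pool : B' ⊆ B₀ ∪ L := hB'sub.trans sdiff_subset
    have st' := st.replace_block hB₀ hB'pool hB'card hB'sum
    -- some yb-class element of L survives outside B'
    have hyb_surv : ∃ w ∈ L, ((Δ w).val : ZMod 3) = yb ∧ w ∉ B' := by
      by_contra hcon
      push_neg at hcon
      have hsubB' : ({l₂, l₂'} : Finset α) ⊆ B' := by
        intro x hx
        simp only [Finset.mem_insert, Finset.mem_singleton] at hx
        rcases hx with h | h
        · rw [h]; exact hcon l₂ hl₂mem.1 hl₂mem.2
        · rw [h]; exact hcon l₂' hl₂'mem.1 hl₂'mem.2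
      have hrest : (B' \ ({l₂, l₂'} : Finset α)).card = 1 := by
        rw [card_sdiff_of_subset hsubB', hB'card, Finset.card_pair hl₂ne]
      obtain ⟨w, hw⟩ := Finset.card_eq_one.mp hrest
      have hwB' : w ∈ B' := by
        have : w ∈ B' \ ({l₂, l₂'} : Finset α) := by rw [hw]; simp
        exact (mem_sdiff.mp this).1
      have hwnot : w ∉ ({l₂, l₂'} : Finset α) := by
        have : w ∈ B' \ ({l₂, l₂'} : Finset α) := by rw [hw]; simp
        exact (mem_sdiff.mp this).2
      have hsplit := Finset.sum_sdiff (f := fun x => ((Δ x).val : ZMod 3)) hsubB'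
      rw [hw, Finset.sum_singleton, Finset.sum_pair hl₂ne, hl₂mem.2, hl₂'mem.2, hB'sum]
        at hsplit
      have hwc : ((Δ w).val : ZMod 3) = yb := by
        have key : ∀ y w : ZMod 3, w + (y + y) = 0 → w = y := by decide
        exact key yb _ hsplit
      -- but w is in B₀ ∪ L with class yb: impossible
      rcases Finset.mem_union.mp (hB'pool hwB') with h | h
      · exact hty ((hB₀cl w h).symm.trans hwc)
      · have : w ∈ L.filter (fun x => ((Δ x).val : ZMod 3) = yb) :=
          mem_filter.mpr ⟨h, hwc⟩
        rw [hypair] at this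
        exact hwnot this
    obtain ⟨w, hwL, hwc, hwB'⟩ := hyb_surv
    have htB' : t ∉ B' := fun h => (mem_sdiff.mp (hB'sub h)).2 (by simp)
    have hl₁B' : l₁ ∉ B' := fun h => (mem_sdiff.mp (hB'sub h)).2 (by simp)
    have htL' : t ∈ S \ (insert B' (𝒜.erase B₀)).biUnion id :=
      st.mem_L' hB₀ (hB₀S ht) htB' (Or.inl ht)
    have hl₁L' : l₁ ∈ S \ (insert B' (𝒜.erase B₀)).biUnion id :=
      st.mem_L' hB₀ (sdiff_subset hl₁mem.1) hl₁B' (Or.inr hl₁mem.1)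
    have hwL' : w ∈ S \ (insert B' (𝒜.erase B₀)).biUnion id :=
      st.mem_L' hB₀ (sdiff_subset hwL) hwB' (Or.inr hwL)
    exact st'.three_classes_end hstq htL' hl₁L' hwL'
      (fun h => htx (h.trans hl₁mem.2)) (fun h => hty (h.trans hwc))
      (fun h => hxyne (hl₁mem.2.symm.trans (h.trans hwc)))


lemma composite_case (m : ℕ) (hm3 : 3 ≤ m) (hcomp : ¬ m.Prime)
    (ih : ∀ k, 3 ≤ k → k < m → Stmt.{u} k) : Stmt.{u} m := by
  intro α _ S Δ hS hval
  by_contra hcon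
  push_neg at hcon
  replace hcon : ∀ T ⊆ S, T.card = m → (∑ x ∈ T, Δ x) ≠ 0 := by
    intro T h1 h2
    exact hcon T h1 h2
  set q := m.minFac with hqdef
  set p := m / q with hpdef
  have hm1 : m ≠ 1 := by omega
  have hqprime : q.Prime := Nat.minFac_prime hm1
  have hq2 : 2 ≤ q := hqprime.two_le
  have hqm : q ∣ m := Nat.minFac_dvd m
  have hm_eq : m = q * p := (Nat.mul_div_cancel' hqm).symm
  have hp2 : 2 ≤ p := by
    have h1 : q ≤ m / q := Nat.minFac_le_div (by omega) hcomp
    omega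
  have hqlt : q < m := by
    have h1 : q * 2 ≤ q * p := Nat.mul_le_mul_left q hp2
    omega
  have hplt : p < m := by
    have h1 : 2 * p ≤ q * p := Nat.mul_le_mul_right p hq2
    omega
  have hstq : 3 ≤ q → Stmt.{u} q := fun h => ih q h hqlt
  have hstp : 3 ≤ p → Stmt.{u} p := fun h => ih p h hplt
  haveI : NeZero q := ⟨by omega⟩
  obtain ⟨𝒜, hAcard, hAfam⟩ := extraction (Δ := Δ) hm_eq (by omega) hS (2 * p - 2) le_rfl
  have st : Setup q p m S Δ 𝒜 := ⟨hm_eq, hq2, hp2, hS, hcon, hAfam, hAcard⟩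
  by_cases himg : (S.image (fun x => ((Δ x).val : ZMod q))).card ≤ 2
  · exact st.beta_end hstq hstp himg hval
  · push_neg at himg
    have himg3 : 3 ≤ (S.image (fun x => ((Δ x).val : ZMod q))).card := himg
    rcases Nat.lt_or_ge q 4 with hq4 | hq4
    · interval_cases q
      · -- q = 2 : impossible, only two classes
        have : (S.image (fun x => ((Δ x).val : ZMod 2))).card ≤ 2 := by
          have h1 : (S.image (fun x => ((Δ x).val : ZMod 2))) ⊆ Finset.univ :=
            Finset.subset_univ _
          have h2 := Finset.card_le_card h1
          simpa using h2
        omega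
      · exact st.alpha3 hstq rfl himg3
    · exact st.alpha_general hstq hq4 himg3

end Setup

/-- greedy pairing into pairs with distinct colors -/
lemma pairing {β : Type u} {γ : Type v} [DecidableEq β] [DecidableEq γ] (f : β → γ) (b₀ : β) :
    ∀ (k : ℕ) (T : Finset β), T.card = 2 * k →
    (∀ v : γ, (T.filter (fun x => f x = v)).card ≤ k) →
    ∃ X Y : ℕ → β,
      (∀ i, i < k → X i ∈ T) ∧ (∀ i, i < k → Y i ∈ T) ∧
      (∀ i, i < k → f (X i) ≠ f (Y i)) ∧
      (∀ i j, i < k → j < k → X i ≠ Y j) ∧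
      (∀ i j, i < k → j < k → i ≠ j → X i ≠ X j ∧ Y i ≠ Y j) ∧
      (∀ t ∈ T, ∃ i, i < k ∧ (t = X i ∨ t = Y i)) := by
  intro k
  induction k with
  | zero =>
    intro T hT _
    refine ⟨fun _ => b₀, fun _ => b₀, by omega, by omega, by omega, by omega, by omega, ?_⟩
    intro t ht
    rw [Finset.card_eq_zero.mp (by omega : T.card = 0)] at ht
    simp at ht
  | succ k ih =>
    intro T hT hmult
    have hTne : T.Nonempty := card_pos.mp (by omega)
    have himg : (T.image f).Nonempty := hTne.image f
    obtain ⟨v, hv, hvmax⟩ := Finset.exists_max_image (T.image f)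
      (fun w => (T.filter (fun x => f x = w)).card) himg
    obtain ⟨x, hxT, hfx⟩ := Finset.mem_image.mp hv
    have hyne : (T.filter (fun t => f t ≠ v)).Nonempty := by
      rw [Finset.filter_nonempty_iff]
      by_contra hcon
      push_neg at hcon
      have : T ⊆ T.filter (fun t => f t = v) :=
        fun t ht => mem_filter.mpr ⟨ht, hcon t ht⟩
      have h2 := Finset.card_le_card this
      have h3 := hmult v
      omega
    obtain ⟨y, hy⟩ := hyne
    have hyT : y ∈ T := (mem_filter.mp hy).1
    have hfy : f y ≠ v := (mem_filter.mp hy).2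
    have hxy : x ≠ y := fun h => hfy (h ▸ hfx)
    set T' := (T.erase x).erase y with hT'def
    have hyex : y ∈ T.erase x := Finset.mem_erase.mpr ⟨hxy.symm, hyT⟩
    have hT'card : T'.card = 2 * k := by
      rw [hT'def, card_erase_of_mem hyex, card_erase_of_mem hxT]
      omega
    have hT'sub : T' ⊆ T := (erase_subset _ _).trans (erase_subset _ _)
    have hxT' : x ∉ T' := fun h => (Finset.mem_erase.mp (Finset.mem_of_mem_erase h)).1 rfl
    have hyT' : y ∉ T' := fun h => (Finset.mem_erase.mp h).1 rfl
    have hT'mult : ∀ w : γ, (T'.filter (fun t => f t = w)).card ≤ k := by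
      intro w
      by_cases hwv : w = v
      · subst hwv
        have hsub : T'.filter (fun t => f t = w) ⊆ (T.filter (fun t => f t = w)).erase x := by
          intro t ht
          exact Finset.mem_erase.mpr ⟨fun h => hxT' (h ▸ (mem_filter.mp ht).1),
            mem_filter.mpr ⟨hT'sub (mem_filter.mp ht).1, (mem_filter.mp ht).2⟩⟩
        have h1 := Finset.card_le_card hsub
        have h2 := card_erase_le (s := T.filter (fun t => f t = w)) (a := x)
        have h3 := hmult w
        have hxmem : x ∈ T.filter (fun t => f t = w) := mem_filter.mpr ⟨hxT, hfx⟩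
        rw [card_erase_of_mem hxmem] at h1
        omega
      · by_cases hwy : w = f y
        · subst hwy
          have hymem : y ∈ T.filter (fun t => f t = f y) := mem_filter.mpr ⟨hyT, rfl⟩
          have hsub : T'.filter (fun t => f t = f y) ⊆
              (T.filter (fun t => f t = f y)).erase y := by
            intro t ht
            exact Finset.mem_erase.mpr ⟨fun h => hyT' (h ▸ (mem_filter.mp ht).1),
              mem_filter.mpr ⟨hT'sub (mem_filter.mp ht).1, (mem_filter.mp ht).2⟩⟩
          have h1 := Finset.card_le_card hsub
          rw [card_erase_of_mem hymem] at h1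
          have h3 := hmult (f y)
          omega
        · -- w distinct from v and f y
          by_contra hcon
          push_neg at hcon
          have hsub : T'.filter (fun t => f t = w) ⊆ T.filter (fun t => f t = w) :=
            fun t ht => mem_filter.mpr ⟨hT'sub (mem_filter.mp ht).1, (mem_filter.mp ht).2⟩
          have h1 := Finset.card_le_card hsub
          have hfw : k + 1 ≤ (T.filter (fun t => f t = w)).card := by omega
          have hwim : w ∈ T.image f := by
            have : (T.filter (fun t => f t = w)).Nonempty := card_pos.mp (by omega)
            obtain ⟨t, ht⟩ := this
            exact mem_image.mpr ⟨t, (mem_filter.mp ht).1, (mem_filter.mp ht).2⟩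
          have hmax := hvmax w hwim
          have hfv : k + 1 ≤ (T.filter (fun t => f t = v)).card := le_trans hfw hmax
          have hdisj : Disjoint (T.filter (fun t => f t = v))
              (T.filter (fun t => f t = w)) := by
            refine Finset.disjoint_left.mpr (fun t ht1 ht2 => ?_)
            exact hwv (((mem_filter.mp ht1).2.symm.trans (mem_filter.mp ht2).2).symm)
          have hsub2 : (T.filter (fun t => f t = v)) ∪ (T.filter (fun t => f t = w)) ⊆ T :=
            Finset.union_subset (filter_subset _ _) (filter_subset _ _)
          have hcard2 := Finset.card_le_card hsub2
          rw [card_union_of_disjoint hdisj] at hcard2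
          have hveq : (T.filter (fun t => f t = v)).card = k + 1 := by
            have := hmult v; omega
          have hweq : (T.filter (fun t => f t = w)).card = k + 1 := by
            have := hmult w; omega
          have hEQ : (T.filter (fun t => f t = v)) ∪ (T.filter (fun t => f t = w)) = T := by
            apply Finset.eq_of_subset_of_card_le hsub2
            rw [card_union_of_disjoint hdisj, hveq, hweq, hT]
            omega
          have hymem : y ∈ (T.filter (fun t => f t = v)) ∪ (T.filter (fun t => f t = w)) :=
            hEQ.symm ▸ hyT
          rcases Finset.mem_union.mp hymem with h | h
          · exact hfy (mem_filter.mp h).2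
          · exact hwy ((mem_filter.mp h).2).symm
    obtain ⟨X', Y', hX'T, hY'T, hfXY', hXY', hinj', hcov'⟩ := ih T' hT'card hT'mult
    set X : ℕ → β := fun i => if i = k then x else X' i with hXdef
    set Y : ℕ → β := fun i => if i = k then y else Y' i with hYdef
    have hXk : X k = x := by simp [hXdef]
    have hYk : Y k = y := by simp [hYdef]
    have hXi : ∀ i, i < k → X i = X' i := by
      intro i hi
      simp only [hXdef]
      rw [if_neg (by omega)]
    have hYi : ∀ i, i < k → Y i = Y' i := by
      intro i hi
      simp only [hYdef]
      rw [if_neg (by omega)]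
    refine ⟨X, Y, ?_, ?_, ?_, ?_, ?_, ?_⟩
    · intro i hi
      rcases Nat.lt_or_ge i k with h | h
      · rw [hXi i h]; exact hT'sub (hX'T i h)
      · have : i = k := by omega
        rw [this, hXk]; exact hxT
    · intro i hi
      rcases Nat.lt_or_ge i k with h | h
      · rw [hYi i h]; exact hT'sub (hY'T i h)
      · have : i = k := by omega
        rw [this, hYk]; exact hyT
    · intro i hi
      rcases Nat.lt_or_ge i k with h | h
      · rw [hXi i h, hYi i h]; exact hfXY' i h
      · have : i = k := by omega
        rw [this, hXk, hYk, hfx]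
        exact fun hh => hfy hh.symm
    · intro i j hi hj
      rcases Nat.lt_or_ge i k with h | h <;> rcases Nat.lt_or_ge j k with h' | h'
      · rw [hXi i h, hYi j h']; exact hXY' i j h h'
      · have : j = k := by omega
        rw [this, hYk, hXi i h]
        exact fun hh => hyT' (hh ▸ hX'T i h)
      · have : i = k := by omega
        rw [this, hXk, hYi j h']
        exact fun hh => hxT' (hh ▸ hY'T j h')
      · have e1 : i = k := by omega
        have e2 : j = k := by omega
        rw [e1, e2, hXk, hYk]
        exact hxy
    · intro i j hi hj hij
      rcases Nat.lt_or_ge i k with h | h <;> rcases Nat.lt_or_ge j k with h' | h'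
      · rw [hXi i h, hXi j h', hYi i h, hYi j h']
        exact hinj' i j h h' hij
      · have : j = k := by omega
        rw [this, hXk, hYk, hXi i h, hYi i h]
        constructor
        · exact fun hh => hxT' (hh ▸ hX'T i h)
        · exact fun hh => hyT' (hh ▸ hY'T i h)
      · have : i = k := by omega
        rw [this, hXk, hYk, hXi j h', hYi j h']
        constructor
        · exact fun hh => hxT' (hh.symm ▸ hX'T j h')
        · exact fun hh => hyT' (hh.symm ▸ hY'T j h')
      · omega
    · intro t ht
      by_cases htx : t = x
      · exact ⟨k, by omega, Or.inl (htx.trans hXk.symm)⟩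
      · by_cases hty : t = y
        · exact ⟨k, by omega, Or.inr (hty.trans hYk.symm)⟩
        · have : t ∈ T' := Finset.mem_erase.mpr ⟨hty, Finset.mem_erase.mpr ⟨htx, ht⟩⟩
          obtain ⟨i, hik, hi⟩ := hcov' t this
          refine ⟨i, by omega, ?_⟩
          rcases hi with h | h
          · left; rw [hXi i hik]; exact h
          · right; rw [hYi i hik]; exact h



/-- subset sums -/
def SSet {p : ℕ} (d : ℕ → ZMod p) (I : Finset ℕ) : Finset (ZMod p) :=
  I.powerset.image (fun J => ∑ i ∈ J, d i)

lemma zero_mem_SSet {p : ℕ} (d : ℕ → ZMod p) (I : Finset ℕ) : 0 ∈ SSet d I :=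
  Finset.mem_image.mpr ⟨∅, Finset.empty_mem_powerset I, by simp⟩

lemma mem_SSet_of_subset {p : ℕ} (d : ℕ → ZMod p) {I J : Finset ℕ} (h : J ⊆ I) :
    (∑ i ∈ J, d i) ∈ SSet d I :=
  Finset.mem_image.mpr ⟨J, Finset.mem_powerset.mpr h, rfl⟩

lemma SSet_insert {p : ℕ} (d : ℕ → ZMod p) {I : Finset ℕ} {a : ℕ} (ha : a ∉ I) :
    SSet d (insert a I) = SSet d I ∪ (SSet d I).image (fun σ => d a + σ) := by
  unfold SSet
  rw [Finset.powerset_insert, Finset.image_union, Finset.image_image, Finset.image_image]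
  congr 1
  refine Finset.image_congr ?_
  intro J hJ
  simp only [Finset.mem_coe, Finset.mem_powerset] at hJ
  simp only [Function.comp_apply]
  rw [Finset.sum_insert (fun h => ha (hJ h))]

lemma SSet_card {p : ℕ} (hp : p.Prime) (d : ℕ → ZMod p) (I : Finset ℕ)
    (hd : ∀ i ∈ I, d i ≠ 0) : min p (I.card + 1) ≤ (SSet d I).card := by
  haveI : Fact p.Prime := ⟨hp⟩
  induction I using Finset.induction_on with
  | empty =>
    have : SSet d ∅ = {0} := by
      unfold SSet
      rw [Finset.powerset_empty, Finset.image_singleton, Finset.sum_empty]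
    rw [this, Finset.card_singleton, Finset.card_empty]
    have := hp.two_le
    omega
  | @insert a I ha ih =>
    have hda : d a ≠ 0 := hd a (Finset.mem_insert_self a I)
    have ihc := ih (fun i hi => hd i (Finset.mem_insert_of_mem hi))
    have hunion : SSet d (insert a I) = ({0, d a} : Finset (ZMod p)) + SSet d I := by
      rw [SSet_insert d ha]
      ext z
      rw [Finset.mem_add]
      constructor
      · intro hz
        rcases Finset.mem_union.mp hz with h | h
        · exact ⟨0, by simp, z, h, by ring⟩
        · obtain ⟨σ, hσ, hσz⟩ := Finset.mem_image.mp h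
          exact ⟨d a, by simp, σ, hσ, hσz⟩
      · rintro ⟨u, hu, σ, hσ, rfl⟩
        simp only [Finset.mem_insert, Finset.mem_singleton] at hu
        rcases hu with rfl | rfl
        · exact Finset.mem_union_left _ (by simpa using hσ)
        · exact Finset.mem_union_right _ (Finset.mem_image.mpr ⟨σ, hσ, rfl⟩)
    have hne1 : ({0, d a} : Finset (ZMod p)).Nonempty := ⟨0, by simp⟩
    have hne2 : (SSet d I).Nonempty := ⟨0, zero_mem_SSet d I⟩
    have hcd := ZMod.cauchy_davenport hp hne1 hne2
    have hpair : ({0, d a} : Finset (ZMod p)).card = 2 :=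
      Finset.card_pair (fun h => hda h.symm)
    rw [hpair] at hcd
    rw [hunion, Finset.card_insert_of_notMem ha]
    omega


lemma prime_case {p : ℕ} (hp : p.Prime) (hp3 : 3 ≤ p) : Stmt.{u} p := by
  intro α _ S Δ hS hval
  haveI : NeZero p := ⟨by omega⟩
  by_contra hcon
  push_neg at hcon
  replace hcon : ∀ T ⊆ S, T.card = p → (∑ x ∈ T, Δ x) ≠ 0 := fun T h1 h2 => hcon T h1 h2
  -- Case: some value appears ≥ p times
  by_cases hbig : ∃ v : ZMod p, p ≤ (S.filter (fun x => Δ x = v)).card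
  · obtain ⟨v, hv⟩ := hbig
    obtain ⟨T, hT1, hT2⟩ := Finset.exists_subset_card_eq hv
    refine hcon T (hT1.trans (filter_subset _ _)) hT2 ?_
    rw [Finset.sum_congr rfl (fun x hx => (mem_filter.mp (hT1 hx)).2), sum_const, hT2]
    simp [nsmul_eq_mul, ZMod.natCast_self]
  push_neg at hbig
  have hSne : S.Nonempty := card_pos.mp (by rw [hS]; omega)
  obtain ⟨b₀, hb₀⟩ := hSne
  obtain ⟨X, Y, hXT, hYT, hfXY, hXY, hinj, hcov⟩ := pairing Δ b₀ (p - 1) S (by rw [hS]; omega)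
    (fun v => by have := hbig v; omega)
  set k := p - 1 with hk
  have hkp : k + 1 = p := by omega
  set d : ℕ → ZMod p := fun i => Δ (Y i) - Δ (X i) with hd
  have hdne : ∀ i ∈ Finset.range k, d i ≠ 0 := by
    intro i hi h
    rw [hd] at h
    exact hfXY i (mem_range.mp hi) (sub_eq_zero.mp h).symm
  set A : ZMod p := ∑ i ∈ Finset.range k, Δ (X i) with hA
  -- realization
  have hreal : ∀ j, j < k → ∀ J ⊆ (Finset.range k).erase j,
      Δ (Y j) + (A + ∑ i ∈ J, d i) ≠ 0 := by
    intro j hj J hJ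
    have hJr : J ⊆ Finset.range k := hJ.trans (erase_subset _ _)
    have hjJ : j ∉ J := fun h => (mem_erase.mp (hJ h)).1 rfl
    set g : ℕ → α := fun i => if i ∈ J then Y i else X i with hg
    have hgmem : ∀ i ∈ Finset.range k, g i ∈ S := by
      intro i hi
      rw [hg]
      by_cases h : i ∈ J <;> simp only [h, if_true, if_false]
      · exact hYT i (mem_range.mp hi)
      · exact hXT i (mem_range.mp hi)
    have hginj : ∀ i ∈ Finset.range k, ∀ i' ∈ Finset.range k, g i = g i' → i = i' := by
      intro i hi i' hi' hgg
      by_contra hne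
      rw [hg] at hgg
      simp only at hgg
      rw [mem_range] at hi hi'
      by_cases h : i ∈ J <;> by_cases h' : i' ∈ J <;>
        simp only [h, h', if_true, if_false] at hgg
      · exact (hinj i i' hi hi' hne).2 hgg
      · exact hXY i' i hi' hi hgg.symm
      · exact hXY i i' hi hi' hgg
      · exact (hinj i i' hi hi' hne).1 hgg
    set trans := (Finset.range k).image g with htr
    have htrcard : trans.card = k := by
      rw [htr, Finset.card_image_of_injOn (fun a ha b hb => hginj a ha b hb), card_range]
    have hYjtr : Y j ∉ trans := by
      rw [htr]
      intro hmem
      obtain ⟨i, hi, hgi⟩ := Finset.mem_image.mp hmem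
      rw [mem_range] at hi
      rw [hg] at hgi
      by_cases h : i ∈ J <;> simp only [h, if_true, if_false] at hgi
      · have hij : i ≠ j := fun hh => hjJ (hh ▸ h)
        exact (hinj i j hi hj hij).2 hgi
      · exact hXY i j hi hj hgi
    set T := insert (Y j) trans with hT
    have hTsub : T ⊆ S := by
      rw [hT]
      intro x hx
      rcases Finset.mem_insert.mp hx with rfl | hx
      · exact hYT j hj
      · obtain ⟨i, hi, hgi⟩ := Finset.mem_image.mp hx
        exact hgi ▸ hgmem i hi
    have hTcard : T.card = p := by
      rw [hT, card_insert_of_notMem hYjtr, htrcard]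
      omega
    refine fun hzero => hcon T hTsub hTcard ?_
    rw [hT, Finset.sum_insert hYjtr, htr,
      Finset.sum_image (fun a ha b hb => hginj a ha b hb)]
    have hsplit : ∀ i ∈ Finset.range k, Δ (g i) = Δ (X i) + (if i ∈ J then d i else 0) := by
      intro i hi
      rw [hg, hd]
      by_cases h : i ∈ J <;> simp only [h, if_true, if_false]
      · ring
      · ring
    rw [Finset.sum_congr rfl hsplit, Finset.sum_add_distrib, ← hA]
    have : (∑ i ∈ Finset.range k, if i ∈ J then d i else 0) = ∑ i ∈ J, d i := by
      rw [Finset.sum_ite_mem, Finset.inter_eq_right.mpr hJr]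
    rw [this]
    exact hzero
  -- τ and misses
  set τ : ℕ → ZMod p := fun j => -A - Δ (Y j) with hτ
  have hτnot : ∀ j, j < k → τ j ∉ SSet d ((Finset.range k).erase j) := by
    intro j hj hmem
    obtain ⟨J, hJ, hJsum⟩ := Finset.mem_image.mp hmem
    refine hreal j hj J (Finset.mem_powerset.mp hJ) ?_
    rw [hJsum, hτ]
    ring
  have hSSlow : ∀ j, j < k → p - 1 ≤ (SSet d ((Finset.range k).erase j)).card := by
    intro j hj
    have h1 := SSet_card hp d ((Finset.range k).erase j)
      (fun i hi => hdne i (Finset.mem_of_mem_erase hi))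
    rw [card_erase_of_mem (mem_range.mpr hj), card_range] at h1
    omega
  have huniq : ∀ j, j < k → ∀ σ : ZMod p, σ ∉ SSet d ((Finset.range k).erase j) → σ = τ j := by
    intro j hj σ hσ
    by_contra hne
    have hsub : insert σ (insert (τ j) (SSet d ((Finset.range k).erase j))) ⊆ Finset.univ :=
      subset_univ _
    have hc := Finset.card_le_card hsub
    rw [card_insert_of_notMem (by
        intro h
        rcases Finset.mem_insert.mp h with h | h
        · exact hne h
        · exact hσ h),
      card_insert_of_notMem (hτnot j hj), Finset.card_univ, ZMod.card] at hc
    have := hSSlow j hj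
    omega
  -- no 3 distinct elements outside SSet of a doubly-erased index set
  have hno3 : ∀ j j', j < k → j' < k → j ≠ j' →
      ∀ x₁ x₂ x₃ : ZMod p, x₁ ≠ x₂ → x₁ ≠ x₃ → x₂ ≠ x₃ →
      x₁ ∉ SSet d (((Finset.range k).erase j).erase j') →
      x₂ ∉ SSet d (((Finset.range k).erase j).erase j') →
      x₃ ∉ SSet d (((Finset.range k).erase j).erase j') → False := by
    intro j j' hj hj' hjj' x₁ x₂ x₃ h12 h13 h23 hx1 hx2 hx3
    have hlow := SSet_card hp d (((Finset.range k).erase j).erase j')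
      (fun i hi => hdne i (Finset.mem_of_mem_erase (Finset.mem_of_mem_erase hi)))
    have hj'mem : j' ∈ (Finset.range k).erase j :=
      mem_erase.mpr ⟨fun h => hjj' h.symm, mem_range.mpr hj'⟩
    rw [card_erase_of_mem hj'mem, card_erase_of_mem (mem_range.mpr hj), card_range] at hlow
    have hsub : insert x₁ (insert x₂ (insert x₃
        (SSet d (((Finset.range k).erase j).erase j')))) ⊆ Finset.univ := subset_univ _
    have hc := Finset.card_le_card hsub
    rw [card_insert_of_notMem (by
        intro h
        rcases Finset.mem_insert.mp h with h | h
        · exact h12 h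
        rcases Finset.mem_insert.mp h with h | h
        · exact h13 h
        · exact hx1 h),
      card_insert_of_notMem (by
        intro h
        rcases Finset.mem_insert.mp h with h | h
        · exact h23 h
        · exact hx2 h),
      card_insert_of_notMem hx3, Finset.card_univ, ZMod.card] at hc
    omega
  -- pairwise relation
  have hpm : ∀ j j', j < k → j' < k → j ≠ j' → d j = d j' ∨ d j = - d j' := by
    intro j j' hj hj' hjj'
    set I2 := ((Finset.range k).erase j).erase j' with hI2
    have hj'I2 : j' ∉ I2 := Finset.notMem_erase j' _
    have hins : insert j' I2 = (Finset.range k).erase j := by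
      rw [hI2]
      exact Finset.insert_erase (mem_erase.mpr ⟨fun h => hjj' h.symm, mem_range.mpr hj'⟩)
    have hjI2 : j ∉ I2 :=
      fun h => (Finset.mem_erase.mp (Finset.mem_of_mem_erase h)).1 rfl
    have hins' : insert j I2 = (Finset.range k).erase j' := by
      rw [hI2, Finset.erase_right_comm]
      exact Finset.insert_erase (mem_erase.mpr ⟨hjj', mem_range.mpr hj⟩)
    -- τ j and τ j - d j' are not in SSet I2
    have hτj1 : τ j ∉ SSet d I2 := by
      intro h
      refine hτnot j hj ?_
      rw [← hins, SSet_insert d hj'I2]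
      exact Finset.mem_union_left _ h
    have hτj2 : τ j - d j' ∉ SSet d I2 := by
      intro h
      refine hτnot j hj ?_
      rw [← hins, SSet_insert d hj'I2]
      refine Finset.mem_union_right _ (Finset.mem_image.mpr ⟨τ j - d j', h, by ring⟩)
    have hτj'1 : τ j' ∉ SSet d I2 := by
      intro h
      refine hτnot j' hj' ?_
      rw [← hins', SSet_insert d hjI2]
      exact Finset.mem_union_left _ h
    have hτj'2 : τ j' - d j ∉ SSet d I2 := by
      intro h
      refine hτnot j' hj' ?_
      rw [← hins', SSet_insert d hjI2]
      refine Finset.mem_union_right _ (Finset.mem_image.mpr ⟨τ j' - d j, h, by ring⟩)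
    have hdj : d j ≠ 0 := hdne j (mem_range.mpr hj)
    have hdj' : d j' ≠ 0 := hdne j' (mem_range.mpr hj')
    have hd1 : τ j ≠ τ j - d j' := by
      intro h
      have : d j' = 0 := by linear_combination h
      exact hdj' this
    -- τ j' is one of the two
    have hone : τ j' = τ j ∨ τ j' = τ j - d j' := by
      by_contra hcon2
      push_neg at hcon2
      exact hno3 j j' hj hj' hjj' (τ j) (τ j - d j') (τ j') hd1
        (fun h => hcon2.1 h.symm) (fun h => hcon2.2 h.symm) hτj1 hτj2 hτj'1
    have htwo : τ j' - d j = τ j ∨ τ j' - d j = τ j - d j' := by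
      by_contra hcon2
      push_neg at hcon2
      exact hno3 j j' hj hj' hjj' (τ j) (τ j - d j') (τ j' - d j) hd1
        (fun h => hcon2.1 h.symm) (fun h => hcon2.2 h.symm) hτj1 hτj2 hτj'2
    rcases hone with h1 | h1 <;> rcases htwo with h2 | h2
    · exfalso; apply hdj; linear_combination h1 - h2
    · left; linear_combination h1 - h2
    · right; linear_combination h1 - h2
    · exfalso; apply hdj; linear_combination h1 - h2
  -- globalize
  have hk2 : 2 ≤ k := by omega
  set D := d 0 with hD
  have hDne : D ≠ 0 := hdne 0 (mem_range.mpr (by omega))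
  have hglob : ∀ i, i < k → d i = D ∨ d i = -D := by
    intro i hi
    by_cases h : i = 0
    · left; rw [h]
    · rcases hpm i 0 hi (by omega) h with h1 | h1
      · left; exact h1
      · right; exact h1
  -- the number of pairs of type D
  haveI : Fact p.Prime := ⟨hp⟩
  set s := ((Finset.range k).filter (fun i => d i = D)).card with hs
  have hDnegD : D ≠ -D := by
    intro h
    have h2 : (2 : ZMod p) * D = 0 := by linear_combination h
    have hp2 : (2 : ZMod p) ≠ 0 := by
      intro hh
      rw [show (2 : ZMod p) = ((2 : ℕ) : ZMod p) by norm_cast,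
        ZMod.natCast_eq_zero_iff] at hh
      have := Nat.le_of_dvd (by omega) hh
      omega
    rcases mul_eq_zero.mp h2 with h3 | h3
    · exact hp2 h3
    · exact hDne h3
  have hcsmul : ∀ c : ℕ, 1 ≤ c → c ≤ p - 1 → ((c : ZMod p) * D) ≠ 0 := by
    intro c h1 h2 hzero
    rcases mul_eq_zero.mp hzero with h3 | h3
    · rw [ZMod.natCast_eq_zero_iff] at h3
      have := Nat.le_of_dvd (by omega) h3
      omega
    · exact hDne h3
  -- τ's formula
  have hτval : ∀ j, j < k →
      τ j = ((((Finset.range k).erase j).filter (fun i => d i = D)).card + 1) • D := by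
    intro j hj
    set sj := (((Finset.range k).erase j).filter (fun i => d i = D)).card with hsj
    refine (huniq j hj ((sj + 1) • D) ?_).symm
    intro hmem
    obtain ⟨J, hJpow, hJsum⟩ := Finset.mem_image.mp hmem
    have hJsub : J ⊆ (Finset.range k).erase j := Finset.mem_powerset.mp hJpow
    set x := (J.filter (fun i => d i = D)).card with hx
    set y := (J.filter (fun i => ¬ d i = D)).card with hy
    have hJsplit : (∑ i ∈ J, d i) = x • D - y • D := by
      rw [← Finset.sum_filter_add_sum_filter_not J (fun i => d i = D)]
      have e1 : ∑ i ∈ J.filter (fun i => d i = D), d i = x • D := by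
        rw [Finset.sum_congr rfl (fun i hi => (mem_filter.mp hi).2), sum_const]
      have e2 : ∑ i ∈ J.filter (fun i => ¬ d i = D), d i = y • (-D) := by
        refine Eq.trans (Finset.sum_congr rfl (fun i hi => ?_)) (by rw [sum_const])
        have h1 := (mem_filter.mp hi).2
        have h2 := hglob i (mem_range.mp
          (Finset.mem_of_mem_erase (hJsub (mem_filter.mp hi).1)))
        tauto
      rw [e1, e2, smul_neg]
      ring
    have hxle : x ≤ sj := by
      rw [hx, hsj]
      exact Finset.card_le_card (Finset.filter_subset_filter _ hJsub)
    have hyle : y ≤ (k - 1) - sj := by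
      have h1 : J.filter (fun i => ¬ d i = D) ⊆
          ((Finset.range k).erase j).filter (fun i => ¬ d i = D) :=
        Finset.filter_subset_filter _ hJsub
      have h2 := Finset.card_le_card h1
      have h3 := Finset.card_filter_add_card_filter_not
        (s := (Finset.range k).erase j) (p := fun i => d i = D)
      rw [card_erase_of_mem (mem_range.mpr hj), card_range] at h3
      omega
    have hsjk : sj ≤ k - 1 := by
      rw [hsj]
      have := Finset.card_le_card (Finset.filter_subset (fun i => d i = D)
        ((Finset.range k).erase j))
      rw [card_erase_of_mem (mem_range.mpr hj), card_range] at this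
      omega
    have hkey : x • D - y • D = (sj + 1) • D := hJsplit.symm.trans hJsum
    have hcle : x ≤ sj + 1 + y := by omega
    have hczero : ((sj + 1 + y - x : ℕ) : ZMod p) * D = 0 := by
      rw [nsmul_eq_mul, nsmul_eq_mul, nsmul_eq_mul] at hkey
      rw [Nat.cast_sub hcle]
      push_cast at hkey ⊢
      linear_combination -hkey
    exact hcsmul (sj + 1 + y - x) (by omega) (by omega) hczero
  -- final: all values lie in a 2-element set
  set Hv : ZMod p := -A - s • D with hHv
  have hfibj : ∀ j, j < k → (((Finset.range k).erase j).filter (fun i => d i = D)).card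
      = s - (if d j = D then 1 else 0) := by
    intro j hj
    rw [Finset.filter_erase]
    by_cases h : d j = D
    · rw [if_pos h, card_erase_of_mem (mem_filter.mpr ⟨mem_range.mpr hj, h⟩)]
    · rw [if_neg h, Finset.erase_eq_of_notMem
        (s := Finset.filter (fun i => d i = D) (Finset.range k)) (a := j)
        (fun hmem => h (mem_filter.mp hmem).2)]
      omega
  have hYval : ∀ j, j < k → Δ (Y j) = -A - τ j := by
    intro j hj
    simp only [hτ]
    ring
  have hXval : ∀ j, j < k → Δ (X j) = Δ (Y j) - d j := by
    intro j hj
    simp only [hd]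
    ring
  have hvals : ∀ j, j < k →
      (Δ (Y j) = Hv ∧ Δ (X j) = Hv - D) ∨ (Δ (Y j) = Hv - D ∧ Δ (X j) = Hv) := by
    intro j hj
    have hτj := hτval j hj
    rw [hfibj j hj] at hτj
    rcases hglob j hj with h | h
    · left
      have hs1 : 1 ≤ s := by
        rw [hs]
        exact card_pos.mpr ⟨j, mem_filter.mpr ⟨mem_range.mpr hj, h⟩⟩
      rw [if_pos h] at hτj
      have h1 : s - 1 + 1 = s := by omega
      rw [h1] at hτj
      constructor
      · rw [hYval j hj, hτj, hHv]
      · rw [hXval j hj, hYval j hj, hτj, hHv, h]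
    · have hnot : ¬ d j = D := fun hh => hDnegD (hh.symm.trans h)
      right
      rw [if_neg hnot] at hτj
      have h1 : s - 0 + 1 = s + 1 := by omega
      rw [h1, succ_nsmul] at hτj
      constructor
      · rw [hYval j hj, hτj, hHv]
        ring
      · rw [hXval j hj, hYval j hj, hτj, hHv, h]
        ring
  have himg2 : S.image Δ ⊆ {Hv, Hv - D} := by
    intro v hv
    obtain ⟨t, ht, rfl⟩ := Finset.mem_image.mp hv
    obtain ⟨i, hik, hi⟩ := hcov t ht
    rcases hi with rfl | rfl <;> rcases hvals i hik with ⟨h1, h2⟩ | ⟨h1, h2⟩ <;>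
      simp [h1, h2]
  have hc1 := Finset.card_le_card himg2
  have hc2 : ({Hv, Hv - D} : Finset (ZMod p)).card ≤ 2 :=
    (Finset.card_insert_le _ _).trans (by simp)
  omega


theorem mainThm : ∀ m : ℕ, 3 ≤ m → Stmt.{u} m := by
  intro m
  induction m using Nat.strong_induction_on with
  | _ m ih =>
    intro hm3
    by_cases hp : m.Prime
    · exact prime_case hp hm3
    · exact Setup.composite_case m hm3 hp (fun k h1 h2 => ih k h2 h1)

end BD

theorem stmt17 {α : Type*} [DecidableEq α] (m : ℕ) (hm : 3 ≤ m)
    (S : Finset α) (hS : S.card = 2 * m - 2) (Δ : α → ZMod m)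
    (hval : 3 ≤ (S.image Δ).card) :
    ∃ T ⊆ S, T.card = m ∧ (∑ x ∈ T, Δ x) = 0 :=
  BD.mainThm m hm S Δ hS hval
end
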